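/- arXiv:0709.3890 — 4 statements merged into one kernel-verified Lean document; each statement's English description precedes it below -/
import Mathlib

section
/- Let q ∈ (1,2] and let μ be a probability measure on ℝ^d. Assume there are constants C, D ≥ 0 such that every smooth function f satisfies the defective q-log-Sobolev inequality Ent_μ(|f|^q) ≤ C ∫ |∇f|^q dμ + D ∫ |f|^q dμ, and a constant E ≥ 0 such that every smooth f satisfies the q-Poincaré inequality ∫ |f − ∫ f dμ|^q dμ ≤ E ∫ |∇f|^q dμ. Then every smooth f satisfies the tight q-log-Sobolev inequality Ent_μ(|f|^q) ≤ 16 (C + (D+1)E) ∫ |∇f|^q dμ. -/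
open MeasureTheory Filter Set

/-- The entropy functional: `Ent_μ(g) = ∫ g log g dμ − (∫ g dμ) log(∫ g dμ)`. -/
noncomputable def entFun {α : Type*} [MeasurableSpace α] (μ : Measure α) (g : α → ℝ) : ℝ :=
  (∫ x, g x * Real.log (g x) ∂μ) - (∫ x, g x ∂μ) * Real.log (∫ x, g x ∂μ)


-- ψ(T) = T log T − T log c − T + c ≥ 0
lemma psi_nonneg {T c : ℝ} (hT : 0 ≤ T) (hc : 0 < c) :
    0 ≤ T * Real.log T - T * Real.log c - T + c := by
  rcases eq_or_lt_of_le hT with h | hT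
  · simp [← h]; positivity
  · have h1 : Real.log (c / T) ≤ c / T - 1 := Real.log_le_sub_one_of_pos (by positivity)
    rw [Real.log_div (ne_of_gt hc) (ne_of_gt hT)] at h1
    have h2 : T * (Real.log c - Real.log T) ≤ T * (c / T - 1) :=
      mul_le_mul_of_nonneg_left h1 hT.le
    have h3 : T * (c / T - 1) = c - T := by field_simp
    nlinarith

lemma psi_le_sq {u c : ℝ} (hu : 0 ≤ u) (hc : 0 < c) :
    u * Real.log u - u * Real.log c - u + c ≤ (u - c) ^ 2 / c := by
  rcases eq_or_lt_of_le hu with h | hu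
  · rw [← h]
    have h0 : ((0:ℝ) - c) ^ 2 / c = c := by
      field_simp [sq]
      ring
    rw [h0]; simp
  · have h1 : Real.log (u / c) ≤ u / c - 1 := Real.log_le_sub_one_of_pos (by positivity)
    rw [Real.log_div (ne_of_gt hu) (ne_of_gt hc)] at h1
    have h2 : u * (Real.log u - Real.log c) ≤ u * (u / c - 1) :=
      mul_le_mul_of_nonneg_left h1 hu.le
    have h3 : u * (u / c - 1) = u ^ 2 / c - u := by field_simp
    have h4 : (u - c) ^ 2 / c = u ^ 2 / c - 2 * u + c := by field_simp; ring
    nlinarith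

lemma half_aux {r : ℝ} (hr : 1 ≤ r) :
    r * Real.log r - r + 1 ≤ (r - 1) ^ 2 / 2 := by
  set F : ℝ → ℝ := fun x => (x - 1) ^ 2 / 2 - (x * Real.log x - x + 1) with hF
  have hder : ∀ x : ℝ, 0 < x → HasDerivAt F (x - 1 - Real.log x) x := by
    intro x hx
    have h1 : HasDerivAt (fun y : ℝ => (y - 1) ^ 2 / 2) (x - 1) x := by
      have := (((hasDerivAt_id x).sub_const 1).pow 2).div_const 2
      exact this.congr_deriv (by norm_num)
    have h2 : HasDerivAt (fun y : ℝ => y * Real.log y - y + 1) (Real.log x) x := by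
      have := (((hasDerivAt_id x).mul (Real.hasDerivAt_log (ne_of_gt hx))).sub
        (hasDerivAt_id x)).add_const 1
      exact this.congr_deriv (by simp [hx.ne'])
    have h3 := h1.sub h2
    exact h3
  have hcont : ContinuousOn F (Set.Ici (1:ℝ)) := by
    apply ContinuousOn.sub
    · fun_prop
    · apply ContinuousOn.add ?_ continuousOn_const
      apply ContinuousOn.sub ?_ continuousOn_id
      apply ContinuousOn.mul continuousOn_id
      apply Real.continuousOn_log.mono
      intro x hx
      simp only [Set.mem_Ici] at hx
      simp only [Set.mem_compl_iff, Set.mem_singleton_iff]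
      intro h0; rw [h0] at hx; linarith
  have hdiff : DifferentiableOn ℝ F (interior (Set.Ici (1:ℝ))) := by
    rw [interior_Ici]
    intro x hx
    simp only [Set.mem_Ioi] at hx
    exact ((hder x (by linarith)).differentiableAt).differentiableWithinAt
  have hnn : ∀ x ∈ interior (Set.Ici (1:ℝ)), 0 ≤ deriv F x := by
    rw [interior_Ici]
    intro x hx
    simp only [Set.mem_Ioi] at hx
    rw [(hder x (by linarith)).deriv]
    have := Real.log_le_sub_one_of_pos (show (0:ℝ) < x by linarith)
    linarith
  have hmono : MonotoneOn F (Set.Ici (1:ℝ)) :=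
    monotoneOn_of_deriv_nonneg (convex_Ici 1) hcont hdiff hnn
  have h10 : F 1 ≤ F r := hmono (by simp) hr hr
  have h1z : F 1 = 0 := by simp [hF]
  rw [h1z] at h10
  simp only [hF] at h10
  linarith

lemma psi_le_half_sq {u c : ℝ} (hc : 0 < c) (hcu : c ≤ u) :
    u * Real.log u - u * Real.log c - u + c ≤ (u - c) ^ 2 / (2 * c) := by
  have hu : 0 < u := lt_of_lt_of_le hc hcu
  have hr : 1 ≤ u / c := (one_le_div hc).2 hcu
  have h := half_aux hr
  rw [Real.log_div hu.ne' hc.ne'] at h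
  have key := mul_le_mul_of_nonneg_left h hc.le
  calc u * Real.log u - u * Real.log c - u + c
      = c * (u / c * (Real.log u - Real.log c) - u / c + 1) := by
        field_simp
    _ ≤ c * ((u / c - 1) ^ 2 / 2) := key
    _ = (u - c) ^ 2 / (2 * c) := by
        field_simp

-- tangent line bound : a^q - b^q ≤ q a^(q-1) (a-b) for 0 ≤ b ≤ a, 1 ≤ q
lemma rpow_sub_le_tangent {q a b : ℝ} (hq : 1 ≤ q) (hb : 0 ≤ b) (hba : b ≤ a) :
    a ^ q - b ^ q ≤ q * a ^ (q - 1) * (a - b) := by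
  have ha : 0 ≤ a := le_trans hb hba
  rcases ha.eq_or_lt with h0 | ha
  · have hb0 : b = 0 := le_antisymm (h0 ▸ hba) hb
    rw [← h0, hb0]
    simp [Real.zero_rpow (by linarith : q ≠ 0)]
  · have hs : (-1 : ℝ) ≤ b / a - 1 := by
      have : 0 ≤ b / a := div_nonneg hb ha.le
      linarith
    have hB := one_add_mul_self_le_rpow_one_add hs hq
    rw [show (1 : ℝ) + (b / a - 1) = b / a by ring] at hB
    rw [Real.div_rpow hb ha.le] at hB
    have haq : 0 < a ^ q := Real.rpow_pos_of_pos ha q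
    have h1 := mul_le_mul_of_nonneg_left hB haq.le
    rw [mul_div_cancel₀ _ haq.ne'] at h1
    have hsplit : a ^ q = a ^ (q - 1) * a := by
      rw [← Real.rpow_add_one ha.ne' (q - 1)]
      norm_num
    have hba' : a ^ q * (b / a) = a ^ (q - 1) * b := by
      rw [hsplit]
      field_simp
    nlinarith [h1, hba', hsplit]

lemma sq_tangent_bound {q m w : ℝ} (hq1 : 1 ≤ q) (hq2 : q ≤ 2) (hm : 0 < m)
    (hw : 0 ≤ w) (hwm : w ≤ m) :
    (m ^ (q - 1) * w) ^ 2 ≤ m ^ q * w ^ q := by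
  rcases hw.eq_or_lt with h0 | hw0
  · rw [← h0]
    simp [Real.zero_rpow (by linarith : q ≠ 0)]
  · have e1 : (m ^ (q - 1) * w) ^ 2 = m ^ (q - 1) * m ^ (q - 1) * (w ^ q * w ^ (2 - q)) := by
      rw [← Real.rpow_add hw0, show q + (2 - q) = 2 by ring]
      rw [show ((2 : ℝ)) = ((2 : ℕ) : ℝ) by norm_num, Real.rpow_natCast]
      ring
    have e2 : w ^ (2 - q) ≤ m ^ (2 - q) := Real.rpow_le_rpow hw hwm (by linarith)
    have e3 : m ^ (q - 1) * m ^ (q - 1) * m ^ (2 - q) = m ^ q := by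
      rw [← Real.rpow_add hm, ← Real.rpow_add hm, show q - 1 + (q - 1) + (2 - q) = q by ring]
    calc (m ^ (q - 1) * w) ^ 2
        = m ^ (q - 1) * m ^ (q - 1) * (w ^ q * w ^ (2 - q)) := e1
      _ ≤ m ^ (q - 1) * m ^ (q - 1) * (w ^ q * m ^ (2 - q)) := by
          apply mul_le_mul_of_nonneg_left
          · exact mul_le_mul_of_nonneg_left e2 (Real.rpow_nonneg hw q)
          · positivity
      _ = m ^ q * w ^ q := by rw [← e3]; ring

lemma two_rpow_le_four {q : ℝ} (hq2 : q ≤ 2) : (2:ℝ) ^ q ≤ 4 := by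
  calc (2:ℝ) ^ q ≤ (2:ℝ) ^ (2:ℝ) := Real.rpow_le_rpow_of_exponent_le one_le_two hq2
    _ = 4 := by
        rw [show ((2:ℝ)) = ((2:ℕ):ℝ) by norm_num, Real.rpow_natCast]
        norm_num

set_option maxHeartbeats 1000000 in
lemma caseA {q m s P : ℝ} (hq1 : 1 < q) (hq2 : q ≤ 2) (hP : 0 < P) (hm : 0 ≤ m)
    (hPc : P ≤ m ^ q) :
    |m + s| ^ q * Real.log (|m + s| ^ q) - |m + s| ^ q * Real.log (m ^ q) - |m + s| ^ q + m ^ q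
      ≤ 4 * (|s| ^ q * max (Real.log (|s| ^ q / P)) 0) + 9 * |s| ^ q := by
  have hm0 : 0 < m := by
    rcases hm.eq_or_lt with h0 | h0
    · exfalso
      rw [← h0, Real.zero_rpow (by linarith : q ≠ 0)] at hPc
      linarith
    · exact h0
  have hc : 0 < m ^ q := Real.rpow_pos_of_pos hm0 q
  have hv0 : (0:ℝ) ≤ |s| ^ q := Real.rpow_nonneg (abs_nonneg s) q
  have hmax0 : (0:ℝ) ≤ max (Real.log (|s| ^ q / P)) 0 := le_max_right _ _
  have hq0 : (0:ℝ) ≤ q := by linarith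
  rcases le_or_gt |s| m with hsm | hsm
  · -- |s| ≤ m
    obtain ⟨hs1, hs2⟩ := abs_le.mp hsm
    have hms0 : 0 ≤ m + s := by linarith
    have habs : |m + s| = m + s := abs_of_nonneg hms0
    rw [habs]
    rcases le_or_gt s 0 with hs0 | hs0
    · -- s ≤ 0, u ≤ c
      have hms : m + s ≤ m := by linarith
      have hu_le : (m + s) ^ q ≤ m ^ q := Real.rpow_le_rpow hms0 hms hq0
      have htan := rpow_sub_le_tangent hq1.le hms0 hms
      have habs' : m - (m + s) = |s| := by rw [abs_of_nonpos hs0]; ring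
      rw [habs'] at htan
      have hX : 0 ≤ m ^ (q - 1) * |s| := by positivity
      have hsq1 : (m ^ q - (m + s) ^ q) ^ 2 ≤ (q * (m ^ (q - 1) * |s|)) ^ 2 := by
        have h1 : 0 ≤ m ^ q - (m + s) ^ q := by linarith
        have h2 : m ^ q - (m + s) ^ q ≤ q * (m ^ (q - 1) * |s|) := by linarith [htan]
        nlinarith
      have hsq2 := sq_tangent_bound hq1.le hq2 hm0 (abs_nonneg s) hsm
      have hnum : ((m + s) ^ q - m ^ q) ^ 2 ≤ 4 * (|s| ^ q * m ^ q) := by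
        have he : ((m + s) ^ q - m ^ q) ^ 2 = (m ^ q - (m + s) ^ q) ^ 2 := by ring
        rw [he]
        calc (m ^ q - (m + s) ^ q) ^ 2 ≤ (q * (m ^ (q - 1) * |s|)) ^ 2 := hsq1
          _ = q ^ 2 * (m ^ (q - 1) * |s|) ^ 2 := by ring
          _ ≤ q ^ 2 * (m ^ q * |s| ^ q) := by
              apply mul_le_mul_of_nonneg_left hsq2; positivity
          _ ≤ 4 * (|s| ^ q * m ^ q) := by
              have hq4 : q ^ 2 ≤ 4 := by nlinarith
              have := mul_le_mul_of_nonneg_right hq4 (mul_nonneg hc.le hv0)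
              nlinarith [this]
      have hdiv : ((m + s) ^ q - m ^ q) ^ 2 / m ^ q ≤ 4 * |s| ^ q := by
        rw [div_le_iff₀ hc]
        calc ((m + s) ^ q - m ^ q) ^ 2 ≤ 4 * (|s| ^ q * m ^ q) := hnum
          _ = 4 * |s| ^ q * m ^ q := by ring
      have hW := psi_le_sq (Real.rpow_nonneg hms0 q) hc
      linarith [hW, hdiv, mul_nonneg hv0 hmax0]
    · -- 0 < s, c ≤ u
      have hms : m ≤ m + s := by linarith
      have h2m : m + s ≤ 2 * m := by linarith
      have h2m0 : (0:ℝ) < 2 * m := by linarith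
      have hu_ge : m ^ q ≤ (m + s) ^ q := Real.rpow_le_rpow hm hms hq0
      have htan := rpow_sub_le_tangent hq1.le hm hms
      -- htan : (m+s)^q - m^q ≤ q * (m+s)^(q-1) * (m + s - m)
      have hexp : (m + s) ^ (q - 1) ≤ (2 * m) ^ (q - 1) :=
        Real.rpow_le_rpow hms0 h2m (by linarith)
      have htan2 : (m + s) ^ q - m ^ q ≤ q * ((2 * m) ^ (q - 1) * s) := by
        have : q * (m + s) ^ (q - 1) * (m + s - m) ≤ q * ((2 * m) ^ (q - 1) * s) := by
          have hss : m + s - m = s := by ring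
          rw [hss]
          have := mul_le_mul_of_nonneg_right hexp hs0.le
          nlinarith
        linarith
      have hsq1 : ((m + s) ^ q - m ^ q) ^ 2 ≤ (q * ((2 * m) ^ (q - 1) * s)) ^ 2 := by
        have h1 : 0 ≤ (m + s) ^ q - m ^ q := by linarith
        exact pow_le_pow_left₀ h1 htan2 2
      have hsq2 := sq_tangent_bound hq1.le hq2 h2m0 hs0.le (by linarith : s ≤ 2 * m)
      have habss : |s| = s := abs_of_pos hs0
      have h2q : (2 * m) ^ q = 2 ^ q * m ^ q := Real.mul_rpow (by norm_num) hm
      have h4 : (2:ℝ) ^ q ≤ 4 := two_rpow_le_four hq2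
      have hnum : ((m + s) ^ q - m ^ q) ^ 2 ≤ 16 * (|s| ^ q * m ^ q) := by
        rw [habss]
        calc ((m + s) ^ q - m ^ q) ^ 2 ≤ (q * ((2 * m) ^ (q - 1) * s)) ^ 2 := hsq1
          _ = q ^ 2 * ((2 * m) ^ (q - 1) * s) ^ 2 := by ring
          _ ≤ q ^ 2 * ((2 * m) ^ q * s ^ q) := by
              apply mul_le_mul_of_nonneg_left hsq2; positivity
          _ = q ^ 2 * 2 ^ q * (s ^ q * m ^ q) := by rw [h2q]; ring
          _ ≤ 16 * (s ^ q * m ^ q) := by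
              have hsq0 : (0:ℝ) ≤ s ^ q := Real.rpow_nonneg hs0.le q
              have hq4 : q ^ 2 ≤ 4 := by nlinarith
              have h2q0 : (0:ℝ) ≤ (2:ℝ) ^ q := Real.rpow_nonneg (by norm_num) q
              have h16 : q ^ 2 * 2 ^ q ≤ 16 := by
                calc q ^ 2 * 2 ^ q ≤ 4 * 4 := mul_le_mul hq4 h4 h2q0 (by norm_num)
                  _ = 16 := by norm_num
              exact mul_le_mul_of_nonneg_right h16 (mul_nonneg hsq0 hc.le)
      have hdiv : ((m + s) ^ q - m ^ q) ^ 2 / (2 * m ^ q) ≤ 8 * |s| ^ q := by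
        rw [div_le_iff₀ (by linarith : (0:ℝ) < 2 * m ^ q)]
        calc ((m + s) ^ q - m ^ q) ^ 2 ≤ 16 * (|s| ^ q * m ^ q) := hnum
          _ = 8 * |s| ^ q * (2 * m ^ q) := by ring
      have hW := psi_le_half_sq hc hu_ge
      linarith [hW, hdiv, mul_nonneg hv0 hmax0]
  · -- m < |s|
    have hvc : m ^ q < |s| ^ q := Real.rpow_lt_rpow hm hsm (by linarith)
    have habs2 : |m + s| ≤ 2 * |s| := by
      calc |m + s| ≤ |m| + |s| := abs_add_le m s
        _ = m + |s| := by rw [abs_of_nonneg hm]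
        _ ≤ 2 * |s| := by linarith
    have hu4 : |m + s| ^ q ≤ 2 ^ q * |s| ^ q := by
      calc |m + s| ^ q ≤ (2 * |s|) ^ q := Real.rpow_le_rpow (abs_nonneg _) habs2 hq0
        _ = 2 ^ q * |s| ^ q := Real.mul_rpow (by norm_num) (abs_nonneg s)
    have hu0 : (0:ℝ) ≤ |m + s| ^ q := Real.rpow_nonneg (abs_nonneg _) q
    have hW1 : |m + s| ^ q * Real.log (|m + s| ^ q) - |m + s| ^ q * Real.log (m ^ q)
        - |m + s| ^ q + m ^ q
        ≤ |m + s| ^ q * max (Real.log (|m + s| ^ q) - Real.log (m ^ q)) 0 + |s| ^ q := by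
      have h1 : |m + s| ^ q * Real.log (|m + s| ^ q) - |m + s| ^ q * Real.log (m ^ q)
          = |m + s| ^ q * (Real.log (|m + s| ^ q) - Real.log (m ^ q)) := by ring
      have h2 : |m + s| ^ q * (Real.log (|m + s| ^ q) - Real.log (m ^ q))
          ≤ |m + s| ^ q * max (Real.log (|m + s| ^ q) - Real.log (m ^ q)) 0 :=
        mul_le_mul_of_nonneg_left (le_max_left _ _) hu0
      linarith
    rcases eq_or_lt_of_le (abs_nonneg (m + s)) with h0 | hups
    · -- |m+s| = 0
      rw [← h0, Real.zero_rpow (by linarith : q ≠ 0)]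
      simp only [Real.log_zero, mul_zero, zero_mul, zero_sub, neg_zero, sub_zero, zero_add]
      nlinarith [mul_nonneg hv0 hmax0]
    · have hupos : 0 < |m + s| ^ q := Real.rpow_pos_of_pos hups q
      have hvpos : 0 < |s| ^ q := by linarith [hc]
      have hlogu : Real.log (|m + s| ^ q) ≤ q * Real.log 2 + Real.log (|s| ^ q) := by
        calc Real.log (|m + s| ^ q) ≤ Real.log (2 ^ q * |s| ^ q) :=
              Real.log_le_log hupos hu4
          _ = q * Real.log 2 + Real.log (|s| ^ q) := by
              rw [Real.log_mul (by positivity) (ne_of_gt hvpos), Real.log_rpow (by norm_num)]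
      have hlogc : Real.log P ≤ Real.log (m ^ q) := Real.log_le_log hP hPc
      have hlogdiv : Real.log (|s| ^ q / P) = Real.log (|s| ^ q) - Real.log P :=
        Real.log_div (ne_of_gt hvpos) (ne_of_gt hP)
      have hql2 : 0 ≤ q * Real.log 2 := by
        have := Real.log_nonneg (by norm_num : (1:ℝ) ≤ 2)
        positivity
      have hmaxb : max (Real.log (|m + s| ^ q) - Real.log (m ^ q)) 0
          ≤ max (Real.log (|s| ^ q / P)) 0 + q * Real.log 2 := by
        apply max_le
        · rw [hlogdiv]
          have : Real.log (|m + s| ^ q) - Real.log (m ^ q)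
              ≤ q * Real.log 2 + (Real.log (|s| ^ q) - Real.log P) := by linarith
          calc Real.log (|m + s| ^ q) - Real.log (m ^ q)
              ≤ q * Real.log 2 + (Real.log (|s| ^ q) - Real.log P) := this
            _ ≤ max (Real.log (|s| ^ q) - Real.log P) 0 + q * Real.log 2 := by
                have := le_max_left (Real.log (|s| ^ q) - Real.log P) (0:ℝ)
                linarith
        · positivity
      have hprod : |m + s| ^ q * max (Real.log (|m + s| ^ q) - Real.log (m ^ q)) 0
          ≤ (2 ^ q * |s| ^ q) * (max (Real.log (|s| ^ q / P)) 0 + q * Real.log 2) := by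
        apply mul_le_mul hu4 hmaxb (le_max_right _ _) (by positivity)
      have hl2 : Real.log 2 ≤ 0.6931471808 := le_of_lt Real.log_two_lt_d9
      have h4 : (2:ℝ) ^ q ≤ 4 := two_rpow_le_four hq2
      have h2q0 : (0:ℝ) < 2 ^ q := Real.rpow_pos_of_pos (by norm_num) q
      have hfin : (2 ^ q * |s| ^ q) * (max (Real.log (|s| ^ q / P)) 0 + q * Real.log 2)
          ≤ 4 * (|s| ^ q * max (Real.log (|s| ^ q / P)) 0) + 6 * |s| ^ q := by
        have e1 : (2 ^ q * |s| ^ q) * (max (Real.log (|s| ^ q / P)) 0 + q * Real.log 2)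
            = 2 ^ q * (|s| ^ q * max (Real.log (|s| ^ q / P)) 0)
              + (q * Real.log 2) * (2 ^ q * |s| ^ q) := by ring
        rw [e1]
        have t1 : 2 ^ q * (|s| ^ q * max (Real.log (|s| ^ q / P)) 0)
            ≤ 4 * (|s| ^ q * max (Real.log (|s| ^ q / P)) 0) :=
          mul_le_mul_of_nonneg_right h4 (mul_nonneg hv0 hmax0)
        have t2 : (q * Real.log 2) * (2 ^ q * |s| ^ q) ≤ 6 * |s| ^ q := by
          have hb : (q * Real.log 2) * (2 ^ q * |s| ^ q) ≤ 1.5 * (4 * |s| ^ q) := by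
            apply mul_le_mul
            · nlinarith
            · exact mul_le_mul_of_nonneg_right h4 hv0
            · positivity
            · norm_num
          linarith
        linarith
      linarith [hW1, hprod, hfin, hvc]

lemma add_rpow_le_two_rpow {q a b : ℝ} (hq : 1 ≤ q) (ha : 0 ≤ a) (hb : 0 ≤ b) :
    (a + b) ^ q ≤ 2 ^ (q - 1) * (a ^ q + b ^ q) := by
  have h := NNReal.rpow_add_le_mul_rpow_add_rpow a.toNNReal b.toNNReal hq
  have h2 := NNReal.coe_le_coe.2 h
  push_cast at h2
  rwa [Real.coe_toNNReal a ha, Real.coe_toNNReal b hb] at h2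

set_option maxHeartbeats 1000000 in
lemma caseB {q m s P : ℝ} (hq1 : 1 < q) (hq2 : q ≤ 2) (hP : 0 < P) (hm : 0 ≤ m)
    (hPc : m ^ q ≤ P) :
    |m + s| ^ q * Real.log (|m + s| ^ q) - |m + s| ^ q * Real.log P - |m + s| ^ q + P
      ≤ 4 * (|s| ^ q * max (Real.log (|s| ^ q / P)) 0) + 9 * |s| ^ q + 3 * P := by
  have hv0 : (0:ℝ) ≤ |s| ^ q := Real.rpow_nonneg (abs_nonneg s) q
  have hmax0 : (0:ℝ) ≤ max (Real.log (|s| ^ q / P)) 0 := le_max_right _ _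
  have hu0 : (0:ℝ) ≤ |m + s| ^ q := Real.rpow_nonneg (abs_nonneg _) q
  have hq0 : (0:ℝ) ≤ q := by linarith
  have hu2 : |m + s| ^ q ≤ 2 * P + 2 * |s| ^ q := by
    have h1 : |m + s| ≤ m + |s| := by
      calc |m + s| ≤ |m| + |s| := abs_add_le m s
        _ = m + |s| := by rw [abs_of_nonneg hm]
    have h2 : |m + s| ^ q ≤ (m + |s|) ^ q := Real.rpow_le_rpow (abs_nonneg _) h1 hq0
    have h3 := add_rpow_le_two_rpow hq1.le hm (abs_nonneg s)
    have h4 : (2:ℝ) ^ (q - 1) ≤ 2 := by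
      calc (2:ℝ) ^ (q - 1) ≤ (2:ℝ) ^ (1:ℝ) :=
            Real.rpow_le_rpow_of_exponent_le one_le_two (by linarith)
        _ = 2 := Real.rpow_one 2
    have h5 : (2:ℝ) ^ (q - 1) * (m ^ q + |s| ^ q) ≤ 2 * (P + |s| ^ q) := by
      apply mul_le_mul h4 (by linarith) (by positivity) (by norm_num)
    linarith
  rcases le_or_gt (|m + s| ^ q) P with hup | hup
  · -- u ≤ P
    have hW := psi_le_sq hu0 hP
    have hsq : (|m + s| ^ q - P) ^ 2 ≤ P * P := by nlinarith
    have hdiv : (|m + s| ^ q - P) ^ 2 / P ≤ P := by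
      rw [div_le_iff₀ hP]
      exact hsq
    linarith [mul_nonneg hv0 hmax0]
  · -- P < u
    have hupos : (0:ℝ) < |m + s| ^ q := lt_trans hP hup
    have hlogup : Real.log P ≤ Real.log (|m + s| ^ q) := Real.log_le_log hP hup.le
    set t : ℝ := 1 + |s| ^ q / P with ht
    have ht1 : 1 ≤ t := by
      have : 0 ≤ |s| ^ q / P := div_nonneg hv0 hP.le
      simp [ht]; linarith
    have ht0 : 0 < t := by linarith
    have he : 2 * P + 2 * |s| ^ q = 2 * P * t := by
      field_simp [ht]
      rw [ht, mul_add, mul_one, mul_div_cancel₀ _ hP.ne']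
    have hlog : Real.log (|m + s| ^ q) - Real.log P ≤ Real.log 2 + Real.log t := by
      have h1 : Real.log (|m + s| ^ q) ≤ Real.log (2 * P * t) := by
        apply Real.log_le_log hupos
        rw [← he]; exact hu2
      rw [Real.log_mul (by positivity) (ne_of_gt ht0),
        Real.log_mul (by norm_num) (ne_of_gt hP)] at h1
      linarith
    have hmul : |m + s| ^ q * (Real.log (|m + s| ^ q) - Real.log P)
        ≤ (2 * P + 2 * |s| ^ q) * (Real.log 2 + Real.log t) := by
      apply mul_le_mul hu2 hlog (by linarith) (by positivity)
    have hPlogt : P * Real.log t ≤ |s| ^ q := by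
      have h1 : Real.log t ≤ t - 1 := Real.log_le_sub_one_of_pos ht0
      have h2 : P * Real.log t ≤ P * (t - 1) := mul_le_mul_of_nonneg_left h1 hP.le
      have h3 : P * (t - 1) = |s| ^ q := by
        field_simp [ht]
        rw [ht, add_sub_cancel_left, mul_div_cancel₀ _ hP.ne']
      linarith
    have hlt : Real.log t ≤ Real.log 2 + max (Real.log (|s| ^ q / P)) 0 := by
      rcases le_or_gt (|s| ^ q) P with hvP | hvP
      · have : t ≤ 2 := by
          have : |s| ^ q / P ≤ 1 := (div_le_one hP).2 hvP
          simp [ht]; linarith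
        have := Real.log_le_log ht0 this
        linarith [hmax0]
      · have hd1 : (1:ℝ) ≤ |s| ^ q / P := (one_le_div hP).2 hvP.le
        have : t ≤ 2 * (|s| ^ q / P) := by simp [ht]; linarith
        have h1 := Real.log_le_log ht0 this
        rw [Real.log_mul (by norm_num) (by linarith : |s| ^ q / P ≠ 0)] at h1
        have h2 : Real.log (|s| ^ q / P) ≤ max (Real.log (|s| ^ q / P)) 0 := le_max_left _ _
        linarith
    have hvlogt : |s| ^ q * Real.log t
        ≤ |s| ^ q * (Real.log 2 + max (Real.log (|s| ^ q / P)) 0) :=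
      mul_le_mul_of_nonneg_left hlt hv0
    have hl2 : Real.log 2 ≤ 0.7 := by
      have := Real.log_two_lt_d9
      norm_num at this ⊢
      linarith
    have key : |m + s| ^ q * Real.log (|m + s| ^ q) - |m + s| ^ q * Real.log P
        ≤ (2 * P + 2 * |s| ^ q) * (Real.log 2 + Real.log t) := by
      have : |m + s| ^ q * Real.log (|m + s| ^ q) - |m + s| ^ q * Real.log P
          = |m + s| ^ q * (Real.log (|m + s| ^ q) - Real.log P) := by ring
      rw [this]; exact hmul
    have hexpand : (2 * P + 2 * |s| ^ q) * (Real.log 2 + Real.log t)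
        = 2 * Real.log 2 * P + 2 * (P * Real.log t) + 2 * Real.log 2 * |s| ^ q
          + 2 * (|s| ^ q * Real.log t) := by ring
    nlinarith [mul_nonneg hv0 hmax0, hu0]

lemma pointwise_core {q m s P : ℝ} (hq1 : 1 < q) (hq2 : q ≤ 2) (hP : 0 < P) (hm : 0 ≤ m) :
    |m + s| ^ q * Real.log (|m + s| ^ q) - |m + s| ^ q * Real.log (max (m ^ q) P)
        - |m + s| ^ q + max (m ^ q) P
      ≤ 4 * (|s| ^ q * max (Real.log (|s| ^ q / P)) 0) + 9 * |s| ^ q + 3 * P := by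
  rcases le_total P (m ^ q) with h | h
  · rw [max_eq_left h]
    have := caseA (s := s) hq1 hq2 hP hm h
    linarith
  · rw [max_eq_right h]
    exact caseB hq1 hq2 hP hm h

lemma pointwise_main {q m s P : ℝ} (hq1 : 1 < q) (hq2 : q ≤ 2) (hP : 0 < P) :
    |m + s| ^ q * Real.log (|m + s| ^ q) - |m + s| ^ q * Real.log (max (|m| ^ q) P)
        - |m + s| ^ q + max (|m| ^ q) P
      ≤ 4 * (|s| ^ q * max (Real.log (|s| ^ q / P)) 0) + 9 * |s| ^ q + 3 * P := by
  rcases le_or_gt 0 m with hm | hm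
  · rw [abs_of_nonneg hm]
    exact pointwise_core hq1 hq2 hP hm
  · have h := pointwise_core (m := -m) (s := -s) hq1 hq2 hP (by linarith)
    rw [show -m + -s = -(m + s) by ring, abs_neg, abs_neg,
      show -m = |m| by rw [abs_of_neg hm]] at h
    exact h

lemma log_le_div_exp_one {x : ℝ} (hx : 0 < x) : Real.log x ≤ x / Real.exp 1 := by
  have he : (0:ℝ) < Real.exp 1 := Real.exp_pos 1
  have h1 : Real.log (x / Real.exp 1) ≤ x / Real.exp 1 - 1 :=
    Real.log_le_sub_one_of_pos (by positivity)
  rw [Real.log_div (ne_of_gt hx) (ne_of_gt he), Real.log_exp] at h1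
  linarith

lemma mul_maxlog_eq {v P : ℝ} (hv : 0 ≤ v) (hP : 0 < P) :
    v * max (Real.log (v / P)) 0 = max (v * Real.log v - Real.log P * v) 0 := by
  rcases hv.eq_or_lt with h0 | h0
  · rw [← h0]; simp
  · rw [Real.log_div (ne_of_gt h0) (ne_of_gt hP), mul_max_of_nonneg _ _ hv, mul_zero]
    congr 1
    ring

lemma pospart_le {v P : ℝ} (hv : 0 ≤ v) (hP : 0 < P) :
    max (v * Real.log v - Real.log P * v) 0
      ≤ (v * Real.log v - Real.log P * v) + P / Real.exp 1 := by
  have he : (0:ℝ) < P / Real.exp 1 := by positivity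
  apply max_le
  · linarith
  · -- 0 ≤ v (log v − log P) + P/e, i.e. v(logP − logv) ≤ P/e
    rcases hv.eq_or_lt with h0 | h0
    · rw [← h0]; simp; positivity
    · rcases le_or_gt P v with hPv | hPv
      · have : Real.log P ≤ Real.log v := Real.log_le_log hP hPv
        nlinarith
      · have h1 : Real.log (P / v) ≤ (P / v) / Real.exp 1 :=
          log_le_div_exp_one (by positivity)
        rw [Real.log_div (ne_of_gt hP) (ne_of_gt h0)] at h1
        have h2 := mul_le_mul_of_nonneg_left h1 hv
        have h3 : v * (P / v / Real.exp 1) = P / Real.exp 1 := by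
          field_simp
        rw [h3] at h2
        nlinarith

set_option maxHeartbeats 1000000 in
lemma ent_est {α : Type*} [MeasurableSpace α] (μ : Measure α) [IsProbabilityMeasure μ]
    {q m : ℝ} (hq1 : 1 < q) (hq2 : q ≤ 2) {g : α → ℝ}
    (hu : Integrable (fun x => |m + g x| ^ q) μ)
    (hul : Integrable (fun x => |m + g x| ^ q * Real.log (|m + g x| ^ q)) μ)
    (hv : Integrable (fun x => |g x| ^ q) μ)
    (hvl : Integrable (fun x => |g x| ^ q * Real.log (|g x| ^ q)) μ)
    (hPpos : 0 < ∫ x, |g x| ^ q ∂μ) :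
    entFun μ (fun x => |m + g x| ^ q)
      ≤ 4 * entFun μ (fun x => |g x| ^ q) + 14 * ∫ x, |g x| ^ q ∂μ := by
  set P : ℝ := ∫ x, |g x| ^ q ∂μ with hPdef
  set c : ℝ := max (|m| ^ q) P with hcdef
  have hc : 0 < c := lt_of_lt_of_le hPpos (le_max_right _ _)
  set T : ℝ := ∫ x, |m + g x| ^ q ∂μ with hTdef
  have hT0 : 0 ≤ T := integral_nonneg fun x => Real.rpow_nonneg (abs_nonneg _) _
  have hWint : Integrable (fun x => |m + g x| ^ q * Real.log (|m + g x| ^ q)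
      - Real.log c * |m + g x| ^ q - |m + g x| ^ q + c) μ :=
    ((hul.sub (hu.const_mul (Real.log c))).sub hu).add (integrable_const c)
  have hM : Integrable
      (fun x => max (|g x| ^ q * Real.log (|g x| ^ q) - Real.log P * |g x| ^ q) 0) μ :=
    (hvl.sub (hv.const_mul (Real.log P))).pos_part
  have hRint : Integrable (fun x =>
      4 * max (|g x| ^ q * Real.log (|g x| ^ q) - Real.log P * |g x| ^ q) 0
        + 9 * |g x| ^ q + 3 * P) μ :=
    ((hM.const_mul 4).add (hv.const_mul 9)).add (integrable_const _)
  have hpw : ∀ x, |m + g x| ^ q * Real.log (|m + g x| ^ q)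
      - Real.log c * |m + g x| ^ q - |m + g x| ^ q + c
      ≤ 4 * max (|g x| ^ q * Real.log (|g x| ^ q) - Real.log P * |g x| ^ q) 0
        + 9 * |g x| ^ q + 3 * P := by
    intro x
    have hpm := pointwise_main (m := m) (s := g x) hq1 hq2 hPpos
    rw [mul_maxlog_eq (Real.rpow_nonneg (abs_nonneg _) q) hPpos] at hpm
    rw [hcdef]
    linarith
  have hW1 : Integrable (fun x => |m + g x| ^ q * Real.log (|m + g x| ^ q)
      - Real.log c * |m + g x| ^ q) μ := hul.sub (hu.const_mul (Real.log c))
  have hW2 : Integrable (fun x => |m + g x| ^ q * Real.log (|m + g x| ^ q)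
      - Real.log c * |m + g x| ^ q - |m + g x| ^ q) μ := hW1.sub hu
  have hR1 : Integrable (fun x =>
      4 * max (|g x| ^ q * Real.log (|g x| ^ q) - Real.log P * |g x| ^ q) 0) μ :=
    hM.const_mul 4
  have hR2 : Integrable (fun x =>
      4 * max (|g x| ^ q * Real.log (|g x| ^ q) - Real.log P * |g x| ^ q) 0
        + 9 * |g x| ^ q) μ := hR1.add (hv.const_mul 9)
  have hWR := integral_mono hWint hRint hpw
  -- compute LHS integral
  have hintW : ∫ x, (|m + g x| ^ q * Real.log (|m + g x| ^ q)
      - Real.log c * |m + g x| ^ q - |m + g x| ^ q + c) ∂μ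
      = (∫ x, |m + g x| ^ q * Real.log (|m + g x| ^ q) ∂μ) - Real.log c * T - T + c := by
    rw [integral_add hW2 (integrable_const c),
      integral_sub hW1 hu,
      integral_sub hul (hu.const_mul (Real.log c)),
      integral_const_mul, integral_const]
    simp [measure_univ]
    rw [← hTdef]
  have hintR : ∫ x, (4 * max (|g x| ^ q * Real.log (|g x| ^ q) - Real.log P * |g x| ^ q) 0
        + 9 * |g x| ^ q + 3 * P) ∂μ
      = 4 * (∫ x, max (|g x| ^ q * Real.log (|g x| ^ q) - Real.log P * |g x| ^ q) 0 ∂μ)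
        + 9 * P + 3 * P := by
    rw [integral_add hR2 (integrable_const _),
      integral_add hR1 (hv.const_mul 9),
      integral_const_mul, integral_const_mul, integral_const]
    simp [measure_univ]
    exact hPdef.symm
  -- bound ∫ M
  have hv1 : Integrable (fun x => |g x| ^ q * Real.log (|g x| ^ q)
      - Real.log P * |g x| ^ q) μ := hvl.sub (hv.const_mul (Real.log P))
  have hMle : (∫ x, max (|g x| ^ q * Real.log (|g x| ^ q) - Real.log P * |g x| ^ q) 0 ∂μ)
      ≤ ((∫ x, |g x| ^ q * Real.log (|g x| ^ q) ∂μ) - Real.log P * P) + P / Real.exp 1 := by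
    have h1 := integral_mono hM (hv1.add (integrable_const (P / Real.exp 1)))
      (fun x => pospart_le (Real.rpow_nonneg (abs_nonneg _) q) hPpos)
    simp only [Pi.add_apply] at h1
    rw [integral_add hv1 (integrable_const _),
      integral_sub hvl (hv.const_mul (Real.log P)), integral_const_mul, integral_const] at h1
    simp only [measure_univ, ENNReal.toReal_one, one_smul, smul_eq_mul] at h1
    rw [probReal_univ, one_mul, ← hPdef] at h1
    linarith
  -- step 1 : entFun u ≤ ∫ W
  have hstep1 : entFun μ (fun x => |m + g x| ^ q)
      ≤ (∫ x, |m + g x| ^ q * Real.log (|m + g x| ^ q) ∂μ) - Real.log c * T - T + c := by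
    have hpsi := psi_nonneg hT0 hc
    rw [entFun]
    rw [← hTdef]
    linarith
  have hEv : entFun μ (fun x => |g x| ^ q)
      = (∫ x, |g x| ^ q * Real.log (|g x| ^ q) ∂μ) - P * Real.log P := by
    rw [entFun, ← hPdef]
  have hePexp : P / Real.exp 1 ≤ P / 2 := by
    have h2e : (2:ℝ) ≤ Real.exp 1 := by
      have := Real.exp_one_gt_d9
      linarith
    apply div_le_div_of_nonneg_left hPpos.le (by norm_num) h2e
  rw [hintW] at hWR
  rw [hintR] at hWR
  have := hstep1.trans hWR
  rw [hEv]
  linarith [hMle, hePexp]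

lemma gradient_const_mul' {F : Type*} [NormedAddCommGroup F] [InnerProductSpace ℝ F]
    [CompleteSpace F] {f : F → ℝ} (hf : ∀ y, DifferentiableAt ℝ f y) (t : ℝ) (x : F) :
    gradient (fun y => t * f y) x = t • gradient f x := by
  unfold gradient
  rw [fderiv_const_mul (hf x) t, _root_.map_smul]

lemma gradient_sub_const' {F : Type*} [NormedAddCommGroup F] [InnerProductSpace ℝ F]
    [CompleteSpace F] (f : F → ℝ) (m : ℝ) (x : F) :
    gradient (fun y => f y - m) x = gradient f x := by
  unfold gradient
  rw [fderiv_sub_const]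

set_option maxHeartbeats 1000000 in
lemma keyInt {d : ℕ} (q : ℝ) (hq1 : 1 < q)
    (μ : Measure (EuclideanSpace ℝ (Fin d))) [IsProbabilityMeasure μ]
    (C D : ℝ)
    (hLS : ∀ f : EuclideanSpace ℝ (Fin d) → ℝ, ContDiff ℝ (⊤ : ℕ∞) f →
      entFun μ (fun x => |f x| ^ q) ≤
        C * ∫ x, ‖gradient f x‖ ^ q ∂μ + D * ∫ x, |f x| ^ q ∂μ)
    (h : EuclideanSpace ℝ (Fin d) → ℝ) (hh : ContDiff ℝ (⊤ : ℕ∞) h)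
    (hint : Integrable (fun x => |h x| ^ q) μ) :
    Integrable (fun x => |h x| ^ q * Real.log (|h x| ^ q)) μ := by
  by_contra hni
  set T := ∫ x, |h x| ^ q ∂μ with hT
  set G := ∫ x, ‖gradient h x‖ ^ q ∂μ with hG
  have hT0 : 0 ≤ T := integral_nonneg fun x => Real.rpow_nonneg (abs_nonneg _) _
  have hTpos : 0 < T := by
    rcases hT0.eq_or_lt with h0 | h0
    · exfalso; apply hni
      have hz : (fun x => |h x| ^ q) =ᵐ[μ] 0 :=
        (integral_eq_zero_iff_of_nonneg (fun x => Real.rpow_nonneg (abs_nonneg _) q)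
          hint).mp h0.symm
      apply Integrable.congr (integrable_zero _ _ μ)
      filter_upwards [hz] with x hx
      simp only [Pi.zero_apply] at hx
      simp [hx]
    · exact h0
  have hdiffh : ∀ y, DifferentiableAt ℝ h y := fun y =>
    (hh.differentiable (by simp)).differentiableAt
  have hscale : ∀ t : ℝ, 0 < t →
      -(T * (q * Real.log t + Real.log T)) ≤ C * G + D * T := by
    intro t ht
    have htq : 0 < t ^ q := Real.rpow_pos_of_pos ht q
    have h1 := hLS (fun x => t * h x) (contDiff_const.mul hh)
    have hpow : (fun x : EuclideanSpace ℝ (Fin d) => |t * h x| ^ q)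
        = fun x => t ^ q * |h x| ^ q := by
      funext x
      rw [abs_mul, abs_of_pos ht, Real.mul_rpow ht.le (abs_nonneg _)]
    have hint2 : ∫ x, t ^ q * |h x| ^ q ∂μ = t ^ q * T := integral_const_mul _ _
    have hgrad : (fun x : EuclideanSpace ℝ (Fin d) => ‖gradient (fun y => t * h y) x‖ ^ q)
        = fun x => t ^ q * ‖gradient h x‖ ^ q := by
      funext x
      rw [gradient_const_mul' hdiffh t x, norm_smul]
      simp only [Real.norm_eq_abs, abs_of_pos ht]
      rw [Real.mul_rpow ht.le (norm_nonneg _)]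
    have hgint : ∫ x, t ^ q * ‖gradient h x‖ ^ q ∂μ = t ^ q * G := integral_const_mul _ _
    have hnint : ¬ Integrable (fun x => t ^ q * |h x| ^ q * Real.log (t ^ q * |h x| ^ q)) μ := by
      intro hcon
      apply hni
      have heq : (fun x : EuclideanSpace ℝ (Fin d) =>
          t ^ q * |h x| ^ q * Real.log (t ^ q * |h x| ^ q))
          = fun x => t ^ q * (|h x| ^ q * Real.log (|h x| ^ q))
            + (t ^ q * Real.log (t ^ q)) * |h x| ^ q := by
        funext x
        rcases eq_or_lt_of_le (Real.rpow_nonneg (abs_nonneg (h x)) q) with h0 | h0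
        · rw [← h0]; simp
        · rw [Real.log_mul (ne_of_gt htq) (ne_of_gt h0)]; ring
      rw [heq] at hcon
      have h2 : Integrable (fun x => t ^ q * (|h x| ^ q * Real.log (|h x| ^ q))) μ := by
        apply (hcon.sub (hint.const_mul (t ^ q * Real.log (t ^ q)))).congr
        apply Filter.Eventually.of_forall
        intro x
        simp only [Pi.sub_apply]
        ring
      have h3 := h2.const_mul ((t ^ q)⁻¹)
      apply h3.congr
      apply Filter.Eventually.of_forall
      intro x
      field_simp
    have hent : entFun μ (fun x => |t * h x| ^ q) = -(t ^ q * T * Real.log (t ^ q * T)) := by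
      rw [hpow, entFun]
      rw [integral_undef hnint, hint2]
      ring
    rw [hent] at h1
    rw [hpow] at h1
    rw [hgrad] at h1
    rw [hint2, hgint] at h1
    rw [Real.log_mul (ne_of_gt htq) (ne_of_gt hTpos), Real.log_rpow ht] at h1
    have e1 : -(t ^ q * T * (q * Real.log t + Real.log T))
        = t ^ q * (-(T * (q * Real.log t + Real.log T))) := by ring
    have e2 : C * (t ^ q * G) + D * (t ^ q * T) = t ^ q * (C * G + D * T) := by ring
    rw [e1, e2] at h1
    exact (mul_le_mul_iff_right₀ htq).mp h1
  -- choose t to get a contradiction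
  have hqT : (0:ℝ) < q * T := by positivity
  set L := (C * G + D * T + T * Real.log T + 1) / (q * T) with hL
  have h5 := hscale (Real.exp (-L)) (Real.exp_pos _)
  rw [Real.log_exp] at h5
  have hLexp : q * T * L = C * G + D * T + T * Real.log T + 1 := by
    rw [hL, mul_div_cancel₀ _ (ne_of_gt hqT)]
  have e : -(T * (q * (-L) + Real.log T)) = q * T * L - T * Real.log T := by ring
  rw [e] at h5
  linarith

lemma le_exp_add {w : ℝ} (hw : 0 ≤ w) : w ≤ Real.exp 1 + |w * Real.log w| := by
  rcases le_or_gt w (Real.exp 1) with h | h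
  · have := abs_nonneg (w * Real.log w)
    linarith
  · have hw1 : 1 ≤ Real.log w := by
      rw [Real.le_log_iff_exp_le (by linarith [Real.exp_pos 1])]
      exact h.le
    have h2 : w * 1 ≤ w * Real.log w := mul_le_mul_of_nonneg_left hw1 hw
    have h3 : w * Real.log w ≤ |w * Real.log w| := le_abs_self _
    have := Real.exp_pos 1
    linarith

lemma int_of_intlog {α : Type*} [MeasurableSpace α] {μ : Measure α} [IsProbabilityMeasure μ]
    {w : α → ℝ} (hw : ∀ x, 0 ≤ w x) (hmeas : AEStronglyMeasurable w μ)
    (h : Integrable (fun x => w x * Real.log (w x)) μ) : Integrable w μ := by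
  apply Integrable.mono' ((integrable_const (Real.exp 1)).add h.abs) hmeas
  apply Filter.Eventually.of_forall
  intro x
  rw [Real.norm_eq_abs, abs_of_nonneg (hw x)]
  exact le_exp_add (hw x)

set_option maxHeartbeats 1000000 in
theorem stmt0' {d : ℕ} (q : ℝ) (hq : q ∈ Set.Ioc (1 : ℝ) 2)
    (μ : Measure (EuclideanSpace ℝ (Fin d))) [IsProbabilityMeasure μ]
    (C D E : ℝ) (hC : 0 ≤ C) (hD : 0 ≤ D) (hE : 0 ≤ E)
    (hLS : ∀ f : EuclideanSpace ℝ (Fin d) → ℝ, ContDiff ℝ (⊤ : ℕ∞) f →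
      entFun μ (fun x => |f x| ^ q) ≤
        C * ∫ x, ‖gradient f x‖ ^ q ∂μ + D * ∫ x, |f x| ^ q ∂μ)
    (hP : ∀ f : EuclideanSpace ℝ (Fin d) → ℝ, ContDiff ℝ (⊤ : ℕ∞) f →
      ∫ x, |f x - ∫ y, f y ∂μ| ^ q ∂μ ≤ E * ∫ x, ‖gradient f x‖ ^ q ∂μ) :
    ∀ f : EuclideanSpace ℝ (Fin d) → ℝ, ContDiff ℝ (⊤ : ℕ∞) f →
      entFun μ (fun x => |f x| ^ q) ≤
        16 * (C + (D + 1) * E) * ∫ x, ‖gradient f x‖ ^ q ∂μ := by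
  obtain ⟨hq1, hq2⟩ := hq
  intro f hf
  set G := ∫ x, ‖gradient f x‖ ^ q ∂μ with hG
  have hG0 : 0 ≤ G := integral_nonneg fun x => Real.rpow_nonneg (norm_nonneg _) _
  have hK0 : 0 ≤ 16 * (C + (D + 1) * E) := by positivity
  have hq0 : (0:ℝ) ≤ q := by linarith
  have hucont : Continuous (fun x => |f x| ^ q) :=
    (hf.continuous.abs).rpow_const (fun x => Or.inr hq0)
  by_cases hu : Integrable (fun x => |f x| ^ q) μ
  · -- integrable case
    have hul : Integrable (fun x => |f x| ^ q * Real.log (|f x| ^ q)) μ :=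
      keyInt q hq1 μ C D hLS f hf hu
    set m := ∫ y, f y ∂μ with hm
    set g : EuclideanSpace ℝ (Fin d) → ℝ := fun x => f x - m with hgdef
    have hg : ContDiff ℝ (⊤ : ℕ∞) g := hf.sub contDiff_const
    have hvcont : Continuous (fun x => |g x| ^ q) :=
      (hg.continuous.abs).rpow_const (fun x => Or.inr hq0)
    have hv : Integrable (fun x => |g x| ^ q) μ := by
      apply Integrable.mono' ((hu.const_mul 2).add (integrable_const (2 * |m| ^ q)))
        hvcont.aestronglyMeasurable
      apply Filter.Eventually.of_forall
      intro x
      rw [Real.norm_eq_abs, abs_of_nonneg (Real.rpow_nonneg (abs_nonneg _) q)]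
      have h1 : |g x| ≤ |f x| + |m| := by
        rw [hgdef]
        exact abs_sub _ _
      have h2 : |g x| ^ q ≤ (|f x| + |m|) ^ q :=
        Real.rpow_le_rpow (abs_nonneg _) h1 hq0
      have h3 := add_rpow_le_two_rpow hq1.le (abs_nonneg (f x)) (abs_nonneg m)
      have h4 : (2:ℝ) ^ (q - 1) ≤ 2 := by
        calc (2:ℝ) ^ (q - 1) ≤ (2:ℝ) ^ (1:ℝ) :=
              Real.rpow_le_rpow_of_exponent_le one_le_two (by linarith)
          _ = 2 := Real.rpow_one 2
      have h5 : (2:ℝ) ^ (q - 1) * (|f x| ^ q + |m| ^ q) ≤ 2 * (|f x| ^ q + |m| ^ q) := by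
        apply mul_le_mul_of_nonneg_right h4 (by positivity)
      have h6 : |g x| ^ q ≤ 2 * (|f x| ^ q + |m| ^ q) := le_trans h2 (le_trans h3 h5)
      simp only [Pi.add_apply]
      linarith
    have hvl : Integrable (fun x => |g x| ^ q * Real.log (|g x| ^ q)) μ :=
      keyInt q hq1 μ C D hLS g hg hv
    set P := ∫ x, |g x| ^ q ∂μ with hPdef
    have hP0 : 0 ≤ P := integral_nonneg fun x => Real.rpow_nonneg (abs_nonneg _) _
    rcases hP0.eq_or_lt with hP0' | hPpos
    · -- P = 0 : f is a.e. constant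
      have hz : (fun x => |g x| ^ q) =ᵐ[μ] 0 :=
        (integral_eq_zero_iff_of_nonneg (fun x => Real.rpow_nonneg (abs_nonneg _) q)
          hv).mp hP0'.symm
      have hfm : (fun x => |f x| ^ q) =ᵐ[μ] (fun _ => |m| ^ q) := by
        filter_upwards [hz] with x hx
        simp only [Pi.zero_apply] at hx
        have h1 : |g x| = 0 := by
          by_contra hne
          have : 0 < |g x| := lt_of_le_of_ne (abs_nonneg _) (Ne.symm hne)
          have := Real.rpow_pos_of_pos this q
          linarith [this, hx.le, hx.ge]
        have h2 : f x = m := by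
          have hgx := abs_eq_zero.mp h1
          have hgx' : f x - m = 0 := hgx
          linarith
        rw [h2]
      have he1 : ∫ x, |f x| ^ q * Real.log (|f x| ^ q) ∂μ
          = |m| ^ q * Real.log (|m| ^ q) := by
        rw [integral_congr_ae (by filter_upwards [hfm] with x hx; rw [hx])]
        rw [integral_const]
        simp [measure_univ]
      have he2 : ∫ x, |f x| ^ q ∂μ = |m| ^ q := by
        rw [integral_congr_ae hfm, integral_const]
        simp [measure_univ]
      rw [entFun, he1, he2]
      have : |m| ^ q * Real.log (|m| ^ q) - |m| ^ q * Real.log (|m| ^ q) = 0 := by ring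
      rw [this]
      exact mul_nonneg hK0 hG0
    · -- P > 0 : main estimate
      have hfeq : (fun x : EuclideanSpace ℝ (Fin d) => |m + g x| ^ q)
          = (fun x => |f x| ^ q) := by
        funext x
        rw [show m + g x = f x by rw [hgdef]; ring]
      have hfeq2 : (fun x : EuclideanSpace ℝ (Fin d) =>
          |m + g x| ^ q * Real.log (|m + g x| ^ q))
          = (fun x => |f x| ^ q * Real.log (|f x| ^ q)) := by
        funext x
        rw [show m + g x = f x by rw [hgdef]; ring]
      have hmain := ent_est μ hq1 hq2 (m := m) (g := g)
        (by rw [hfeq]; exact hu) (by rw [hfeq2]; exact hul) hv hvl hPpos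
      rw [hfeq] at hmain
      have hLSg := hLS g hg
      have hgradg : (fun x : EuclideanSpace ℝ (Fin d) => ‖gradient g x‖ ^ q)
          = (fun x => ‖gradient f x‖ ^ q) := by
        funext x
        rw [hgdef]
        rw [gradient_sub_const' f m x]
      rw [hgradg] at hLSg
      -- hLSg : entFun μ v ≤ C * G + D * P
      have hPle : P ≤ E * G := hP f hf
      have hEnt : entFun μ (fun x => |g x| ^ q) ≤ C * G + D * P := hLSg
      have h4 : entFun μ (fun x => |f x| ^ q)
          ≤ 4 * (C * G + D * P) + 14 * P := by linarith
      have hDP : D * P ≤ D * (E * G) := mul_le_mul_of_nonneg_left hPle hD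
      have hCG : 0 ≤ C * G := mul_nonneg hC hG0
      have hEG : 0 ≤ E * G := mul_nonneg hE hG0
      have hDEG : 0 ≤ D * (E * G) := mul_nonneg hD hEG
      nlinarith [h4, hDP, hCG, hEG, hDEG]
  · -- not integrable : entropy is junk 0
    have hul : ¬ Integrable (fun x => |f x| ^ q * Real.log (|f x| ^ q)) μ := by
      intro hcon
      exact hu (int_of_intlog (fun x => Real.rpow_nonneg (abs_nonneg _) q)
        hucont.aestronglyMeasurable hcon)
    rw [entFun, integral_undef hul, integral_undef hu]
    simp only [Real.log_zero, mul_zero, sub_zero, zero_mul, zero_sub, neg_zero]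
    exact mul_nonneg hK0 hG0


/-- a defective q-log-Sobolev inequality together with a q-Poincaré
inequality implies the tight q-log-Sobolev inequality with constant `16 (C + (D+1)E)`. -/
theorem stmt0 {d : ℕ} (q : ℝ) (hq : q ∈ Set.Ioc (1 : ℝ) 2)
    (μ : Measure (EuclideanSpace ℝ (Fin d))) [IsProbabilityMeasure μ]
    (C D E : ℝ) (hC : 0 ≤ C) (hD : 0 ≤ D) (hE : 0 ≤ E)
    (hLS : ∀ f : EuclideanSpace ℝ (Fin d) → ℝ, ContDiff ℝ (⊤ : ℕ∞) f →
      entFun μ (fun x => |f x| ^ q) ≤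
        C * ∫ x, ‖gradient f x‖ ^ q ∂μ + D * ∫ x, |f x| ^ q ∂μ)
    (hP : ∀ f : EuclideanSpace ℝ (Fin d) → ℝ, ContDiff ℝ (⊤ : ℕ∞) f →
      ∫ x, |f x - ∫ y, f y ∂μ| ^ q ∂μ ≤ E * ∫ x, ‖gradient f x‖ ^ q ∂μ) :
    ∀ f : EuclideanSpace ℝ (Fin d) → ℝ, ContDiff ℝ (⊤ : ℕ∞) f →
      entFun μ (fun x => |f x| ^ q) ≤
        16 * (C + (D + 1) * E) * ∫ x, ‖gradient f x‖ ^ q ∂μ :=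
  stmt0' q hq μ C D E hC hD hE hLS hP
end

section
/- Let I : [0,1/2] → ℝ⁺ be a non-decreasing function with I(t) > 0 for t > 0, and let ε ∈ (0,1/2). Let dμ(x) = e^{−V(x)} dx be a probability measure on ℝ^d with V locally bounded, and assume that every Borel set A with a := min(μ(A), μ(A^c)) < ε satisfies μ⁺(∂A) ≥ I(a). Then there exists a constant c > 0 such that every Borel set A satisfies μ⁺(∂A) ≥ c · I(min(μ(A), μ(A^c))). -/
/-!
Outside a large ball `K` the measure `μ` has mass below `ε / 2`, and on `K` its density
`e^{-V}` is bounded above and below. So a set `A` with `min (μ A) (μ Aᶜ) ≥ ε` fills a fixed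
amount of Lebesgue volume of `K` on both sides, and it suffices to show that the `h`-shell of
`A` inside `K` has volume at least `c h`. Either a fixed fraction of `Aᶜ ∩ K` already lies in
the shell, or a fixed fraction lies at distance `> h` from `A`; then every segment from
`A ∩ K` to that far part crosses the shell for a time `≥ h / diam K` (the distance to `A` is
Lipschitz along it), and integrating over all such segments bounds the volume of the shell
from below, since the map `x ↦ (1 - t) x + t z` distorts volume by at most `2ⁿ` for
`t ≤ 1 / 2`, and symmetrically in `z`. For sets of small measure the hypothesis applies
directly, and `I (m) ≤ I (1 / 2)` turns the constant lower bound into one proportional to `I`.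
-/

open MeasureTheory Filter Set

/-- The boundary measure (Minkowski content) of a set `A`:
`μ⁺(∂A) = liminf_{h→0⁺} μ({x ∉ A : dist(x,A) ≤ h})/h`. -/
noncomputable def boundaryMeasure {d : ℕ} (μ : Measure (EuclideanSpace ℝ (Fin d)))
    (A : Set (EuclideanSpace ℝ (Fin d))) : ENNReal :=
  Filter.liminf (fun h : ℝ => μ {x | x ∉ A ∧ Metric.infDist x A ≤ h} / ENNReal.ofReal h)
    (nhdsWithin 0 (Set.Ioi 0))

open Metric AffineMap Topology
open scoped ENNReal NNReal

lemma ofReal_sub_le_mul_volume_setOf_mem_Ioc {f : ℝ → ℝ} {L : ℝ≥0} (hf : LipschitzWith L f)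
    {a b : ℝ} (ha : f 0 ≤ a) (hb : b ≤ f 1) :
    ENNReal.ofReal (b - a) ≤ L * volume {t ∈ Icc (0 : ℝ) 1 | f t ∈ Ioc a b} := by
  calc ENNReal.ofReal (b - a) = volume (Ioc a b) := Real.volume_Ioc.symm
    _ ≤ volume (f '' {t ∈ Icc (0 : ℝ) 1 | f t ∈ Ioc a b}) := by
        refine measure_mono fun y hy => ?_
        obtain ⟨t, ht, rfl⟩ := intermediate_value_Icc zero_le_one hf.continuous.continuousOn
          ⟨ha.trans hy.1.le, hy.2.trans hb⟩
        exact ⟨t, ⟨ht, hy⟩, rfl⟩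
    _ ≤ L * volume {t ∈ Icc (0 : ℝ) 1 | f t ∈ Ioc a b} := by
        rw [← hausdorffMeasure_real]
        simpa using hf.hausdorffMeasure_image_le zero_le_one {t ∈ Icc (0 : ℝ) 1 | f t ∈ Ioc a b}

section NormedSpace

variable {E : Type*} [NormedAddCommGroup E] [NormedSpace ℝ E]

lemma ofReal_le_nndist_mul_volume_setOf_infDist_lineMap_mem_Ioc {A : Set E} {x z : E}
    (hx : x ∈ A) {h : ℝ} (hz : h ≤ infDist z A) :
    ENNReal.ofReal h ≤
      nndist x z * volume {t ∈ Icc (0 : ℝ) 1 | infDist (lineMap x z t) A ∈ Ioc 0 h} := by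
  have hf : LipschitzWith (nndist x z) fun t : ℝ => infDist (lineMap x z t) A := by
    simpa [Function.comp_def] using
      (lipschitz_infDist_pt A).comp (lipschitzWith_lineMap (𝕜 := ℝ) x z)
  simpa using ofReal_sub_le_mul_volume_setOf_mem_Ioc hf (a := 0) (b := h)
    (by simp [infDist_zero_of_mem hx]) (by simpa using hz)

variable [FiniteDimensional ℝ E] [MeasurableSpace E] [BorelSpace E]
  (μ : Measure E) [μ.IsAddHaarMeasure]

lemma addHaar_preimage_smul_add_le {a : ℝ} (ha : 1 / 2 ≤ a) (c : E) (B : Set E) :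
    μ ((fun x => a • x + c) ⁻¹' B) ≤ 2 ^ Module.finrank ℝ E * μ B := by
  have ha0 : 0 < a := by linarith
  change μ ((a • ·) ⁻¹' ((· + c) ⁻¹' B)) ≤ _
  rw [Measure.addHaar_preimage_smul μ ha0.ne', measure_preimage_add_right]
  gcongr
  rw [← ENNReal.ofReal_ofNat, ← ENNReal.ofReal_pow (by norm_num), abs_of_pos (by positivity),
    ← inv_pow]
  gcongr
  rw [inv_le_comm₀ ha0 two_pos]
  linarith

section Segments

variable {X Z B : Set E}

lemma measurableSet_setOf_lineMap_mem (hX : MeasurableSet X) (hZ : MeasurableSet Z)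
    (hB : MeasurableSet B) :
    MeasurableSet {q : ℝ × E × E | q.1 ∈ Icc 0 1 ∧ q.2.1 ∈ X ∧ q.2.2 ∈ Z ∧
      lineMap q.2.1 q.2.2 q.1 ∈ B} := by
  have hcont : Continuous fun q : ℝ × E × E => lineMap q.2.1 q.2.2 q.1 := by fun_prop
  exact (measurable_fst measurableSet_Icc).inter <| (measurable_snd.fst hX).inter <|
    (measurable_snd.snd hZ).inter (hcont.measurable hB)

lemma addHaar_prod_setOf_lineMap_mem_le (hX : MeasurableSet X) (hZ : MeasurableSet Z)
    (hB : MeasurableSet B) (t : ℝ) :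
    (μ.prod μ) {p : E × E | p.1 ∈ X ∧ p.2 ∈ Z ∧ lineMap p.1 p.2 t ∈ B} ≤
      2 ^ Module.finrank ℝ E * μ B * (μ X + μ Z) := by
  have hS : MeasurableSet {p : E × E | p.1 ∈ X ∧ p.2 ∈ Z ∧ lineMap p.1 p.2 t ∈ B} := by
    have hcont : Continuous fun p : E × E => lineMap p.1 p.2 t := by fun_prop
    exact (measurable_fst hX).inter <| (measurable_snd hZ).inter (hcont.measurable hB)
  rcases le_total t (1 / 2) with ht | ht
  · calc (μ.prod μ) _ = ∫⁻ z, μ ((fun x => (x, z)) ⁻¹' _) ∂μ := Measure.prod_apply_symm hS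
      _ ≤ ∫⁻ z, Z.indicator (fun _ => 2 ^ Module.finrank ℝ E * μ B) z ∂μ := by
        refine lintegral_mono fun z => ?_
        by_cases hz : z ∈ Z
        · rw [indicator_of_mem hz]
          refine (measure_mono fun x hx => ?_).trans
            (addHaar_preimage_smul_add_le μ (a := 1 - t) (by linarith) (t • z) B)
          simpa [lineMap_apply_module] using hx.2.2
        · simp [hz]
      _ = 2 ^ Module.finrank ℝ E * μ B * μ Z := lintegral_indicator_const hZ _
      _ ≤ _ := by gcongr; exact le_add_self
  · calc (μ.prod μ) _ = ∫⁻ x, μ (Prod.mk x ⁻¹' _) ∂μ := Measure.prod_apply hS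
      _ ≤ ∫⁻ x, X.indicator (fun _ => 2 ^ Module.finrank ℝ E * μ B) x ∂μ := by
        refine lintegral_mono fun x => ?_
        by_cases hx : x ∈ X
        · rw [indicator_of_mem hx]
          refine (measure_mono fun z hz => ?_).trans
            (addHaar_preimage_smul_add_le μ (a := t) (by linarith) ((1 - t) • x) B)
          simpa [lineMap_apply_module, add_comm] using hz.2.2
        · simp [hx]
      _ = 2 ^ Module.finrank ℝ E * μ B * μ X := lintegral_indicator_const hX _
      _ ≤ _ := by gcongr; exact le_self_add

lemma mul_addHaar_mul_le_of_le_volume_lineMap (hX : MeasurableSet X) (hZ : MeasurableSet Z)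
    (hB : MeasurableSet B) {ℓ : ℝ≥0∞}
    (hℓ : ∀ x ∈ X, ∀ z ∈ Z, ℓ ≤ volume {t ∈ Icc (0 : ℝ) 1 | lineMap x z t ∈ B}) :
    ℓ * μ X * μ Z ≤ 2 ^ Module.finrank ℝ E * μ B * (μ X + μ Z) := by
  set S := {q : ℝ × E × E | q.1 ∈ Icc 0 1 ∧ q.2.1 ∈ X ∧ q.2.2 ∈ Z ∧ lineMap q.2.1 q.2.2 q.1 ∈ B}
  have hS : MeasurableSet S := measurableSet_setOf_lineMap_mem hX hZ hB
  calc ℓ * μ X * μ Z = ∫⁻ p, (X ×ˢ Z).indicator (fun _ => ℓ) p ∂(μ.prod μ) := by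
        rw [lintegral_indicator_const (hX.prod hZ), Measure.prod_prod, mul_assoc]
    _ ≤ ∫⁻ p, volume ((fun t => (t, p)) ⁻¹' S) ∂(μ.prod μ) := by
        refine lintegral_mono fun p => ?_
        by_cases hp : p ∈ X ×ˢ Z
        · rw [indicator_of_mem hp]
          refine (hℓ p.1 hp.1 p.2 hp.2).trans (measure_mono fun t ht => ?_)
          exact ⟨ht.1, hp.1, hp.2, ht.2⟩
        · simp [hp]
    _ = ((volume : Measure ℝ).prod (μ.prod μ)) S := (Measure.prod_apply_symm hS).symm
    _ = ∫⁻ t, (μ.prod μ) (Prod.mk t ⁻¹' S) := Measure.prod_apply hS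
    _ ≤ ∫⁻ t, (Icc (0 : ℝ) 1).indicator
          (fun _ => 2 ^ Module.finrank ℝ E * μ B * (μ X + μ Z)) t := by
        refine lintegral_mono fun t => ?_
        by_cases ht : t ∈ Icc (0 : ℝ) 1
        · rw [indicator_of_mem ht]
          refine (measure_mono fun p hp => ?_).trans
            (addHaar_prod_setOf_lineMap_mem_le μ hX hZ hB t)
          exact hp.2
        · have : Prod.mk t ⁻¹' S = ∅ := eq_empty_of_forall_notMem fun p hp => ht hp.1
          simp [this, ht]
    _ = 2 ^ Module.finrank ℝ E * μ B * (μ X + μ Z) := by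
        simp [lintegral_indicator_const measurableSet_Icc]

end Segments

lemma ofReal_div_mul_mul_le_addHaar_inter_shell {K A : Set E} (hKc : Convex ℝ K)
    (hKm : MeasurableSet K) (hA : MeasurableSet A) {D : ℝ} (hD0 : 0 < D)
    (hD : ∀ x ∈ K, ∀ y ∈ K, dist x y ≤ D) (h : ℝ) :
    ENNReal.ofReal (h / D) * μ (A ∩ K) * μ (K ∩ {y | h < infDist y A}) ≤
      2 ^ Module.finrank ℝ E * μ (K ∩ {y | y ∉ A ∧ infDist y A ≤ h}) *
        (μ (A ∩ K) + μ (K ∩ {y | h < infDist y A})) := by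
  have hmeas : Measurable fun y => infDist y A := (continuous_infDist_pt A).measurable
  refine mul_addHaar_mul_le_of_le_volume_lineMap μ (hA.inter hKm)
    (hKm.inter (measurableSet_lt measurable_const hmeas))
    (hKm.inter (hA.compl.inter (measurableSet_le hmeas measurable_const))) ?_
  intro x hx z hz
  rw [ENNReal.ofReal_div_of_pos hD0]
  refine ENNReal.div_le_of_le_mul' ?_
  calc ENNReal.ofReal h ≤ nndist x z * volume {t ∈ Icc (0 : ℝ) 1 |
        infDist (lineMap x z t) A ∈ Ioc 0 h} :=
        ofReal_le_nndist_mul_volume_setOf_infDist_lineMap_mem_Ioc hx.1 hz.2.le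
    _ ≤ ENNReal.ofReal D * volume {t ∈ Icc (0 : ℝ) 1 |
        lineMap x z t ∈ K ∩ {y | y ∉ A ∧ infDist y A ≤ h}} := by
        gcongr with t ht
        · rw [← ENNReal.ofReal_coe_nnreal, coe_nndist]
          exact ENNReal.ofReal_le_ofReal (hD x hx.2 z hz.1)
        · exact fun hI => ⟨hKc.lineMap_mem hx.2 hz.1 ht,
            fun hA' => (infDist_zero_of_mem hA').not_gt hI.1, hI.2⟩

lemma ofReal_mul_le_addHaar_inter_shell {K A : Set E} (hKc : Convex ℝ K)
    (hKm : MeasurableSet K) (hA : MeasurableSet A) {D κ δ h : ℝ} (hD0 : 0 < D)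
    (hD : ∀ x ∈ K, ∀ y ∈ K, dist x y ≤ D) (hκ : 0 < κ) (hKκ : μ K ≤ ENNReal.ofReal κ)
    (hδ : 0 < δ) (hh : 0 ≤ h) (hAK : ENNReal.ofReal δ ≤ μ (A ∩ K))
    (hFar : ENNReal.ofReal (δ / 2) ≤ μ (K ∩ {y | h < infDist y A})) :
    ENNReal.ofReal (δ * (δ / 2) / (D * (2 ^ Module.finrank ℝ E * (κ + κ))) * h) ≤
      μ (K ∩ {y | y ∉ A ∧ infDist y A ≤ h}) := by
  set n := Module.finrank ℝ E
  have hK_le : ∀ S ⊆ K, μ S ≤ ENNReal.ofReal κ := fun S hS => (measure_mono hS).trans hKκ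
  have hκ' : (0 : ℝ) < 2 ^ n * (κ + κ) := by positivity
  refine (ENNReal.mul_le_mul_iff_left (ENNReal.ofReal_pos.2 hκ').ne' ENNReal.ofReal_ne_top).1 ?_
  calc ENNReal.ofReal (δ * (δ / 2) / (D * (2 ^ n * (κ + κ))) * h) *
        ENNReal.ofReal (2 ^ n * (κ + κ))
      = ENNReal.ofReal (h / D) * ENNReal.ofReal δ * ENNReal.ofReal (δ / 2) := by
        rw [← ENNReal.ofReal_mul (by positivity), ← ENNReal.ofReal_mul (by positivity),
          ← ENNReal.ofReal_mul (by positivity)]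
        congr 1
        field_simp
    _ ≤ ENNReal.ofReal (h / D) * μ (A ∩ K) * μ (K ∩ {y | h < infDist y A}) := by gcongr
    _ ≤ 2 ^ n * μ (K ∩ {y | y ∉ A ∧ infDist y A ≤ h}) *
          (μ (A ∩ K) + μ (K ∩ {y | h < infDist y A})) :=
        ofReal_div_mul_mul_le_addHaar_inter_shell μ hKc hKm hA hD0 hD h
    _ ≤ 2 ^ n * μ (K ∩ {y | y ∉ A ∧ infDist y A ≤ h}) *
          (ENNReal.ofReal κ + ENNReal.ofReal κ) := by
        gcongr
        exacts [hK_le _ inter_subset_right, hK_le _ inter_subset_left]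
    _ = μ (K ∩ {y | y ∉ A ∧ infDist y A ≤ h}) * ENNReal.ofReal (2 ^ n * (κ + κ)) := by
        rw [ENNReal.ofReal_mul (by positivity), ENNReal.ofReal_pow zero_le_two,
          ENNReal.ofReal_add hκ.le hκ.le, ENNReal.ofReal_ofNat]
        ring

lemma exists_forall_eventually_ofReal_mul_le_addHaar_inter_shell {K : Set E}
    (hKc : Convex ℝ K) (hKm : MeasurableSet K) (hKb : Bornology.IsBounded K) {δ : ℝ}
    (hδ : 0 < δ) :
    ∃ c > 0, ∀ A : Set E, MeasurableSet A → ENNReal.ofReal δ ≤ μ (A ∩ K) →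
      ENNReal.ofReal δ ≤ μ (Aᶜ ∩ K) → ∀ᶠ h in 𝓝[>] 0,
        ENNReal.ofReal (c * h) ≤ μ (K ∩ {y | y ∉ A ∧ infDist y A ≤ h}) := by
  obtain ⟨D, hD⟩ := isBounded_iff.1 hKb
  obtain ⟨κ, hκ, hKκ⟩ : ∃ κ : ℝ, 0 < κ ∧ μ K ≤ ENNReal.ofReal κ :=
    ⟨(μ K).toReal + 1, by positivity, by
      rw [ENNReal.ofReal_add ENNReal.toReal_nonneg zero_le_one,
        ENNReal.ofReal_toReal hKb.measure_lt_top.ne]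
      exact le_self_add⟩
  set c := δ * (δ / 2) / (max D 1 * (2 ^ Module.finrank ℝ E * (κ + κ)))
  have hc : 0 < c := by positivity
  refine ⟨c, hc, fun A hA hAK hAcK => ?_⟩
  filter_upwards [Ioo_mem_nhdsGT (show 0 < δ / 2 / c by positivity)] with h ⟨hh, hhc⟩
  have hcover : ENNReal.ofReal (δ / 2) + ENNReal.ofReal (δ / 2) ≤
      μ (K ∩ {y | y ∉ A ∧ infDist y A ≤ h}) + μ (K ∩ {y | h < infDist y A}) := by
    rw [← ENNReal.ofReal_add (by positivity) (by positivity), add_halves]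
    refine hAcK.trans ((measure_mono fun y hy => ?_).trans (measure_union_le _ _))
    obtain ⟨hyA, hyK⟩ := hy
    rcases le_or_gt (infDist y A) h with hy | hy
    exacts [Or.inl ⟨hyK, hyA, hy⟩, Or.inr ⟨hyK, hy⟩]
  rcases le_or_gt (ENNReal.ofReal (δ / 2)) (μ (K ∩ {y | y ∉ A ∧ infDist y A ≤ h}))
    with hnear | hfar
  · refine le_trans (ENNReal.ofReal_le_ofReal ?_) hnear
    have := (lt_div_iff₀ hc).1 hhc
    linarith
  · refine ofReal_mul_le_addHaar_inter_shell μ hKc hKm hA (lt_max_of_lt_right one_pos)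
      (fun x hx y hy => (hD hx hy).trans (le_max_left _ _)) hκ hKκ hδ hh.le hAK ?_
    by_contra! hlt
    exact (ENNReal.add_lt_add hfar hlt).not_ge hcover

end NormedSpace

lemma ofReal_exp_neg_mul_le_withDensity_apply {α : Type*} [MeasurableSpace α] {ν : Measure α}
    {V : α → ℝ} {M : ℝ} {s : Set α} (hs : MeasurableSet s) (hV : ∀ x ∈ s, |V x| ≤ M) :
    ENNReal.ofReal (Real.exp (-M)) * ν s ≤
      ν.withDensity (fun x => ENNReal.ofReal (Real.exp (-V x))) s := by
  rw [withDensity_apply _ hs, ← setLIntegral_const]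
  refine setLIntegral_mono' hs fun x hx => ENNReal.ofReal_le_ofReal (Real.exp_le_exp.2 ?_)
  linarith [abs_le.1 (hV x hx)]

lemma withDensity_apply_le_ofReal_exp_mul {α : Type*} [MeasurableSpace α] {ν : Measure α}
    {V : α → ℝ} {M : ℝ} {s : Set α} (hs : MeasurableSet s) (hV : ∀ x ∈ s, |V x| ≤ M) :
    ν.withDensity (fun x => ENNReal.ofReal (Real.exp (-V x))) s ≤
      ENNReal.ofReal (Real.exp M) * ν s := by
  rw [withDensity_apply _ hs, ← setLIntegral_const]
  refine setLIntegral_mono' hs fun x hx => ENNReal.ofReal_le_ofReal (Real.exp_le_exp.2 ?_)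
  linarith [abs_le.1 (hV x hx)]

lemma le_measure_inter_of_add_le {α : Type*} [MeasurableSpace α] {μ : Measure α}
    {S K : Set α} {a b : ℝ≥0∞} (hb : b ≠ ∞) (hS : a + b ≤ μ S) (hK : μ Kᶜ ≤ b) :
    a ≤ μ (S ∩ K) := by
  refine (ENNReal.add_le_add_iff_right hb).1 (hS.trans ?_)
  calc μ S ≤ μ (S ∩ K) + μ (S \ K) := measure_le_inter_add_sdiff μ S K
    _ ≤ μ (S ∩ K) + b := by
        gcongr
        exact (measure_mono (sdiff_subset_compl S K)).trans hK

lemma exists_measure_compl_closedBall_le {E : Type*} [NormedAddCommGroup E] [CompleteSpace E]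
    [SecondCountableTopology E] [MeasurableSpace E] [BorelSpace E] (μ : Measure E)
    [IsFiniteMeasure μ] {a : ℝ≥0∞} (ha : 0 < a) :
    ∃ R > 0, μ (closedBall 0 R)ᶜ ≤ a := by
  have := tendsto_measure_compl_closedBall_of_isTightMeasureSet
    (isTightMeasureSet_singleton (μ := μ)) 0
  simp only [mem_singleton_iff, iSup_iSup_eq_left] at this
  exact ((eventually_gt_atTop 0).and (this.eventually (ge_mem_nhds ha))).exists

lemma min_toReal_measure_compl_le_half {α : Type*} [MeasurableSpace α] (μ : Measure α)
    [IsProbabilityMeasure μ] {A : Set α} (hA : MeasurableSet A) :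
    min (μ A).toReal (μ Aᶜ).toReal ≤ 1 / 2 := by
  have : (μ A).toReal + (μ Aᶜ).toReal = 1 := by
    rw [← ENNReal.toReal_add (measure_ne_top μ A) (measure_ne_top μ Aᶜ),
      measure_add_measure_compl hA, measure_univ, ENNReal.toReal_one]
  linarith [min_le_left (μ A).toReal (μ Aᶜ).toReal, min_le_right (μ A).toReal (μ Aᶜ).toReal]

section Euclidean

variable {d : ℕ}

lemma ofReal_le_boundaryMeasure {μ : Measure (EuclideanSpace ℝ (Fin d))}
    {A : Set (EuclideanSpace ℝ (Fin d))} {c : ℝ}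
    (hc : ∀ᶠ h in 𝓝[>] 0, ENNReal.ofReal (c * h) ≤ μ {x | x ∉ A ∧ infDist x A ≤ h}) :
    ENNReal.ofReal c ≤ boundaryMeasure μ A := by
  refine le_liminf_of_le (by isBoundedDefault) ?_
  filter_upwards [hc, self_mem_nhdsWithin] with h hch (hh : 0 < h)
  rw [ENNReal.le_div_iff_mul_le (Or.inl (ENNReal.ofReal_pos.2 hh).ne')
    (Or.inl ENNReal.ofReal_ne_top), ← ENNReal.ofReal_mul' hh.le]
  exact hch

lemma exists_ofReal_le_boundaryMeasure_of_le_measure (V : EuclideanSpace ℝ (Fin d) → ℝ)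
    (hVloc : ∀ r : ℝ, ∃ M : ℝ, ∀ x, ‖x‖ ≤ r → |V x| ≤ M)
    (μ : Measure (EuclideanSpace ℝ (Fin d)))
    (hμ : μ = volume.withDensity (fun x => ENNReal.ofReal (Real.exp (-V x))))
    [IsFiniteMeasure μ] {η : ℝ} (hη : 0 < η) :
    ∃ c > 0, ∀ A : Set (EuclideanSpace ℝ (Fin d)), MeasurableSet A →
      ENNReal.ofReal η ≤ μ A → ENNReal.ofReal η ≤ μ Aᶜ →
        ENNReal.ofReal c ≤ boundaryMeasure μ A := by
  obtain ⟨R, -, hR⟩ := exists_measure_compl_closedBall_le μ (ENNReal.ofReal_pos.2 (half_pos hη))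
  set K : Set (EuclideanSpace ℝ (Fin d)) := closedBall 0 R
  obtain ⟨M, hM⟩ := hVloc R
  have hVK : ∀ x ∈ K, |V x| ≤ M := fun x hx => hM x (mem_closedBall_zero_iff.1 hx)
  obtain ⟨c, hc, hshell⟩ := exists_forall_eventually_ofReal_mul_le_addHaar_inter_shell volume
    (convex_closedBall (0 : EuclideanSpace ℝ (Fin d)) R) measurableSet_closedBall
    isBounded_closedBall (δ := Real.exp (-M) * (η / 2)) (by positivity)
  have hvol : ∀ S, MeasurableSet S → ENNReal.ofReal η ≤ μ S →
      ENNReal.ofReal (Real.exp (-M) * (η / 2)) ≤ volume (S ∩ K) := by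
    intro S hS hSη
    have hhalf : ENNReal.ofReal (η / 2) ≤ μ (S ∩ K) := by
      refine le_measure_inter_of_add_le ENNReal.ofReal_ne_top ?_ hR
      rwa [← ENNReal.ofReal_add (by positivity) (by positivity), add_halves]
    calc ENNReal.ofReal (Real.exp (-M) * (η / 2))
        ≤ ENNReal.ofReal (Real.exp (-M)) * (ENNReal.ofReal (Real.exp M) * volume (S ∩ K)) := by
          rw [ENNReal.ofReal_mul (Real.exp_pos _).le]
          gcongr
          rw [hμ] at hhalf
          exact hhalf.trans (withDensity_apply_le_ofReal_exp_mul
            (hS.inter measurableSet_closedBall) fun x hx => hVK x hx.2)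
      _ = volume (S ∩ K) := by
          rw [← mul_assoc, ← ENNReal.ofReal_mul (Real.exp_pos _).le, ← Real.exp_add]
          simp
  refine ⟨Real.exp (-M) * c, by positivity, fun A hA hAη hAcη => ofReal_le_boundaryMeasure ?_⟩
  filter_upwards [hshell A hA (hvol A hA hAη) (hvol Aᶜ hA.compl hAcη)] with h hh
  have hmeas : MeasurableSet (K ∩ {y | y ∉ A ∧ infDist y A ≤ h}) :=
    measurableSet_closedBall.inter
      (hA.compl.inter (measurableSet_le (continuous_infDist_pt A).measurable measurable_const))
  calc ENNReal.ofReal (Real.exp (-M) * c * h)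
      = ENNReal.ofReal (Real.exp (-M)) * ENNReal.ofReal (c * h) := by
        rw [mul_assoc, ENNReal.ofReal_mul (Real.exp_pos _).le]
    _ ≤ ENNReal.ofReal (Real.exp (-M)) * volume (K ∩ {y | y ∉ A ∧ infDist y A ≤ h}) := by
        gcongr
    _ ≤ μ (K ∩ {y | y ∉ A ∧ infDist y A ≤ h}) := by
        rw [hμ]
        exact ofReal_exp_neg_mul_le_withDensity_apply hmeas fun x hx => hVK x hx.1
    _ ≤ μ {x | x ∉ A ∧ infDist x A ≤ h} := measure_mono inter_subset_right

end Euclidean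

theorem stmt2_general {d : ℕ} (I : ℝ → ℝ)
    (hImono : MonotoneOn I (Set.Icc 0 (1 / 2)))
    (hIpos : ∀ t ∈ Set.Ioc (0 : ℝ) (1 / 2), 0 < I t)
    (ε : ℝ) (hε : ε ∈ Set.Ioo (0 : ℝ) (1 / 2))
    (V : EuclideanSpace ℝ (Fin d) → ℝ)
    (hVloc : ∀ r : ℝ, ∃ M : ℝ, ∀ x, ‖x‖ ≤ r → |V x| ≤ M)
    (μ : Measure (EuclideanSpace ℝ (Fin d)))
    (hμ : μ = volume.withDensity (fun x => ENNReal.ofReal (Real.exp (-V x))))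
    [IsProbabilityMeasure μ]
    (hiso : ∀ A : Set (EuclideanSpace ℝ (Fin d)), MeasurableSet A →
      min (μ A).toReal (μ Aᶜ).toReal < ε →
      ENNReal.ofReal (I (min (μ A).toReal (μ Aᶜ).toReal)) ≤ boundaryMeasure μ A) :
    ∃ c > (0 : ℝ), ∀ A : Set (EuclideanSpace ℝ (Fin d)), MeasurableSet A →
      ENNReal.ofReal (c * I (min (μ A).toReal (μ Aᶜ).toReal)) ≤ boundaryMeasure μ A := by
  obtain ⟨c₁, hc₁, hlarge⟩ := exists_ofReal_le_boundaryMeasure_of_le_measure V hVloc μ hμ hε.1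
  have hI : 0 < I (1 / 2) := hIpos _ ⟨by norm_num, le_rfl⟩
  refine ⟨min 1 (c₁ / I (1 / 2)), by positivity, fun A hA => ?_⟩
  set m := min (μ A).toReal (μ Aᶜ).toReal
  have hm : m ∈ Icc (0 : ℝ) (1 / 2) := ⟨by positivity, min_toReal_measure_compl_le_half μ hA⟩
  rw [ENNReal.ofReal_mul (by positivity)]
  rcases lt_or_ge m ε with hsmall | hbig
  · calc ENNReal.ofReal (min 1 (c₁ / I (1 / 2))) * ENNReal.ofReal (I m)
        ≤ 1 * ENNReal.ofReal (I m) := by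
          gcongr
          exact ENNReal.ofReal_le_one.2 (min_le_left _ _)
      _ ≤ boundaryMeasure μ A := by rw [one_mul]; exact hiso A hA hsmall
  · calc ENNReal.ofReal (min 1 (c₁ / I (1 / 2))) * ENNReal.ofReal (I m)
        ≤ ENNReal.ofReal (c₁ / I (1 / 2)) * ENNReal.ofReal (I (1 / 2)) := by
          gcongr
          · exact min_le_right _ _
          · exact hImono hm ⟨by norm_num, le_rfl⟩ hm.2
      _ = ENNReal.ofReal c₁ := by
          rw [← ENNReal.ofReal_mul (by positivity), div_mul_cancel₀ _ hI.ne']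
      _ ≤ boundaryMeasure μ A :=
          hlarge A hA (ENNReal.ofReal_le_of_le_toReal (hbig.trans (min_le_left _ _)))
            (ENNReal.ofReal_le_of_le_toReal (hbig.trans (min_le_right _ _)))

/-- an isoperimetric inequality known for sets of small (or large) measure
extends, up to a constant, to all sets, for measures `e^{-V} dx` with locally bounded `V`. -/
theorem stmt2 {d : ℕ} (I : ℝ → ℝ)
    (hImono : MonotoneOn I (Set.Icc 0 (1 / 2)))
    (hInonneg : ∀ t ∈ Set.Icc (0 : ℝ) (1 / 2), 0 ≤ I t)
    (hIpos : ∀ t ∈ Set.Ioc (0 : ℝ) (1 / 2), 0 < I t)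
    (ε : ℝ) (hε : ε ∈ Set.Ioo (0 : ℝ) (1 / 2))
    (V : EuclideanSpace ℝ (Fin d) → ℝ)
    (hVloc : ∀ r : ℝ, ∃ M : ℝ, ∀ x, ‖x‖ ≤ r → |V x| ≤ M)
    (μ : Measure (EuclideanSpace ℝ (Fin d)))
    (hμ : μ = volume.withDensity (fun x => ENNReal.ofReal (Real.exp (-V x))))
    [IsProbabilityMeasure μ]
    (hiso : ∀ A : Set (EuclideanSpace ℝ (Fin d)), MeasurableSet A →
      min (μ A).toReal (μ Aᶜ).toReal < ε →
      ENNReal.ofReal (I (min (μ A).toReal (μ Aᶜ).toReal)) ≤ boundaryMeasure μ A) :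
    ∃ c > (0 : ℝ), ∀ A : Set (EuclideanSpace ℝ (Fin d)), MeasurableSet A →
      ENNReal.ofReal (c * I (min (μ A).toReal (μ Aᶜ).toReal)) ≤ boundaryMeasure μ A :=
  stmt2_general I hImono hIpos ε hε V hVloc μ hμ hiso
end

section
/- Let p ∈ (1,2]. Then for all x, u ∈ ℝ^d, ‖x+u‖_p^p ≤ ‖x‖_p^p + ⟨u, ∇(‖·‖_p^p)(x)⟩ + 2^{2−p} ‖u‖_p^p; explicitly, Σ_{i=1}^d |x_i+u_i|^p ≤ Σ_{i=1}^d |x_i|^p + p Σ_{i=1}^d sign(x_i)|x_i|^{p−1} u_i + 2^{2−p} Σ_{i=1}^d |u_i|^p. -/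
/-!
The signed power `φ(s) = sign(s) |s| ^ (p - 1)` is the derivative of `|s| ^ p`, and for
`0 < q ≤ 1` the map `s ↦ sign(s) |s| ^ q` is `q`-Hölder with constant `2 ^ (1 - q)`:
writing `s = s⁺ - s⁻` reduces this to the subadditivity and the concavity of `r ↦ r ^ q`.
Hence along the segment `t ↦ x + t u` the derivative of `|x + t u| ^ p` exceeds `p φ(x) u` by at
most `p 2 ^ (2 - p) |u| ^ p t ^ (p - 1)`, the derivative of `2 ^ (2 - p) |u| ^ p t ^ p`; comparing
the two sides on `[0, 1]` gives the inequality in each coordinate, and summing gives the claim.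
-/

open Real Set

namespace Real

lemma rpow_sub_rpow_le_rpow_sub {q a b : ℝ} (hq₀ : 0 ≤ q) (hq₁ : q ≤ 1) (hb : 0 ≤ b)
    (hba : b ≤ a) : a ^ q - b ^ q ≤ (a - b) ^ q := by
  have h := rpow_add_le_add_rpow (sub_nonneg.2 hba) hb hq₀ hq₁
  rw [sub_add_cancel] at h
  linarith

lemma rpow_add_rpow_le_two_rpow_mul_rpow_add {q a b : ℝ} (hq₀ : 0 ≤ q) (hq₁ : q ≤ 1)
    (ha : 0 ≤ a) (hb : 0 ≤ b) : a ^ q + b ^ q ≤ 2 ^ (1 - q) * (a + b) ^ q := by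
  have h := (concaveOn_rpow hq₀ hq₁).2 (mem_Ici.2 ha) (mem_Ici.2 hb)
    (by norm_num : (0 : ℝ) ≤ 1 / 2) (by norm_num : (0 : ℝ) ≤ 1 / 2) (add_halves 1)
  have h2 : (0 : ℝ) < 2 ^ q := by positivity
  simp only [smul_eq_mul, one_div_mul_eq_div, ← add_div] at h
  rw [div_rpow (add_nonneg ha hb) zero_le_two, le_div_iff₀ h2] at h
  rw [rpow_sub zero_lt_two, rpow_one, div_mul_eq_mul_div, le_div_iff₀ h2]
  linarith

end Real

noncomputable def signedRpow (q s : ℝ) : ℝ := Real.sign s * |s| ^ q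

section signedRpow

variable {q : ℝ}

lemma signedRpow_eq_abs_rpow_sub_one_mul (s : ℝ) : signedRpow q s = |s| ^ (q - 1) * s := by
  rcases eq_or_ne s 0 with rfl | hs
  · simp [signedRpow]
  · rw [signedRpow, rpow_sub_one (abs_ne_zero.2 hs), div_mul_eq_mul_div,
      eq_div_iff (abs_ne_zero.2 hs)]
    rcases hs.lt_or_gt with h | h
    · rw [Real.sign_of_neg h, abs_of_neg h]; ring
    · rw [Real.sign_of_pos h, abs_of_pos h]; ring

lemma signedRpow_eq_posPart_sub_negPart (hq : q ≠ 0) (s : ℝ) :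
    signedRpow q s = s⁺ ^ q - s⁻ ^ q := by
  rcases lt_trichotomy s 0 with h | rfl | h
  · rw [signedRpow, Real.sign_of_neg h, abs_of_neg h, posPart_of_nonpos h.le,
      negPart_of_nonpos h.le, zero_rpow hq]
    ring
  · simp [signedRpow, zero_rpow hq]
  · rw [signedRpow, Real.sign_of_pos h, abs_of_pos h, posPart_of_nonneg h.le,
      negPart_of_nonneg h.le, zero_rpow hq]
    ring

lemma monotone_signedRpow (hq : 0 < q) : Monotone (signedRpow q) := by
  intro t s hts
  simp only [signedRpow_eq_posPart_sub_negPart hq.ne']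
  have h₁ := rpow_le_rpow (posPart_nonneg t) (posPart_mono hts) hq.le
  have h₂ := rpow_le_rpow (negPart_nonneg s) (negPart_anti hts) hq.le
  linarith

lemma signedRpow_sub_signedRpow_le (hq₀ : 0 < q) (hq₁ : q ≤ 1) {s t : ℝ} (hts : t ≤ s) :
    signedRpow q s - signedRpow q t ≤ 2 ^ (1 - q) * (s - t) ^ q := by
  simp only [signedRpow_eq_posPart_sub_negPart hq₀.ne']
  have hpos : t⁺ ≤ s⁺ := posPart_mono hts
  have hneg : s⁻ ≤ t⁻ := negPart_anti hts
  have hsum : (s⁺ - t⁺) + (t⁻ - s⁻) = s - t := by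
    linarith [posPart_sub_negPart s, posPart_sub_negPart t]
  have h₁ := rpow_sub_rpow_le_rpow_sub hq₀.le hq₁ (posPart_nonneg t) hpos
  have h₂ := rpow_sub_rpow_le_rpow_sub hq₀.le hq₁ (negPart_nonneg s) hneg
  have h₃ := rpow_add_rpow_le_two_rpow_mul_rpow_add hq₀.le hq₁ (sub_nonneg.2 hpos)
    (sub_nonneg.2 hneg)
  rw [hsum] at h₃
  linarith

lemma abs_signedRpow_sub_signedRpow_le (hq₀ : 0 < q) (hq₁ : q ≤ 1) (s t : ℝ) :
    |signedRpow q s - signedRpow q t| ≤ 2 ^ (1 - q) * |s - t| ^ q := by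
  rcases le_total t s with h | h
  · rw [abs_of_nonneg (sub_nonneg.2 (monotone_signedRpow hq₀ h)), abs_of_nonneg (sub_nonneg.2 h)]
    exact signedRpow_sub_signedRpow_le hq₀ hq₁ h
  · rw [abs_sub_comm, abs_sub_comm s, abs_of_nonneg (sub_nonneg.2 (monotone_signedRpow hq₀ h)),
      abs_of_nonneg (sub_nonneg.2 h)]
    exact signedRpow_sub_signedRpow_le hq₀ hq₁ h

lemma hasDerivAt_abs_rpow_signedRpow {p : ℝ} (hp : 1 < p) (y : ℝ) :
    HasDerivAt (fun y : ℝ ↦ |y| ^ p) (p * signedRpow (p - 1) y) y := by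
  convert hasDerivAt_abs_rpow y hp using 1
  rw [signedRpow_eq_abs_rpow_sub_one_mul, sub_sub, one_add_one_eq_two, mul_assoc]

end signedRpow

lemma signedRpow_add_mul_mul_le {p : ℝ} (hp₁ : 1 < p) (hp₂ : p ≤ 2) (x u : ℝ) {t : ℝ}
    (ht : 0 ≤ t) :
    signedRpow (p - 1) (x + t * u) * u ≤
      signedRpow (p - 1) x * u + 2 ^ (2 - p) * |u| ^ p * t ^ (p - 1) := by
  set φ := signedRpow (p - 1)
  have hφ := abs_signedRpow_sub_signedRpow_le (q := p - 1) (by linarith) (by linarith)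
    (x + t * u) x
  rw [add_sub_cancel_left, abs_mul, abs_of_nonneg ht, mul_rpow ht (abs_nonneg u),
    show (1 : ℝ) - (p - 1) = 2 - p by ring] at hφ
  have hu : |u| ^ p = |u| ^ (p - 1) * |u| := by
    rw [← rpow_add_one' (abs_nonneg u) (by linarith), sub_add_cancel]
  calc φ (x + t * u) * u = φ x * u + (φ (x + t * u) - φ x) * u := by ring
    _ ≤ φ x * u + |φ (x + t * u) - φ x| * |u| := by
      gcongr _ + ?_
      rw [← abs_mul]
      exact le_abs_self _
    _ ≤ φ x * u + 2 ^ (2 - p) * (t ^ (p - 1) * |u| ^ (p - 1)) * |u| := by gcongr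
    _ = φ x * u + 2 ^ (2 - p) * |u| ^ p * t ^ (p - 1) := by rw [hu]; ring

lemma abs_add_rpow_le {p : ℝ} (hp₁ : 1 < p) (hp₂ : p ≤ 2) (x u : ℝ) :
    |x + u| ^ p ≤ |x| ^ p + p * (Real.sign x * |x| ^ (p - 1) * u) + 2 ^ (2 - p) * |u| ^ p := by
  set φ := signedRpow (p - 1)
  set f : ℝ → ℝ := fun t ↦ |x + t * u| ^ p
  set B : ℝ → ℝ := fun t ↦ |x| ^ p + t * (p * φ x * u) + 2 ^ (2 - p) * |u| ^ p * t ^ p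
  have hf (t : ℝ) : HasDerivAt f (p * φ (x + t * u) * u) t := by
    exact (hasDerivAt_abs_rpow_signedRpow hp₁ (x + t * u)).comp t
      ((hasDerivAt_mul_const u).const_add x)
  have hB (t : ℝ) :
      HasDerivAt B (p * φ x * u + 2 ^ (2 - p) * |u| ^ p * (p * t ^ (p - 1))) t := by
    refine ((hasDerivAt_mul_const _).const_add _).add ?_
    exact (hasDerivAt_rpow_const (Or.inr hp₁.le)).const_mul _
  have bound (t : ℝ) (ht : t ∈ Ico (0 : ℝ) 1) :
      p * φ (x + t * u) * u ≤ p * φ x * u + 2 ^ (2 - p) * |u| ^ p * (p * t ^ (p - 1)) := by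
    have h := mul_le_mul_of_nonneg_left (signedRpow_add_mul_mul_le hp₁ hp₂ x u ht.1)
      (by linarith : (0 : ℝ) ≤ p)
    linarith
  have hfB := image_le_of_deriv_right_le_deriv_boundary (a := 0) (b := 1)
    (fun t _ ↦ (hf t).continuousAt.continuousWithinAt) (fun t _ ↦ (hf t).hasDerivWithinAt)
    (by simp [f, B, zero_rpow (by linarith : p ≠ 0)])
    (fun t _ ↦ (hB t).continuousAt.continuousWithinAt) (fun t _ ↦ (hB t).hasDerivWithinAt)
    bound (right_mem_Icc.2 zero_le_one)
  simpa [f, B, φ, signedRpow, mul_assoc] using hfB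

/-- smoothness-type inequality for the `p`-th power of the `ℓ_p` norm,
`1 < p ≤ 2`:
`Σ|xᵢ+uᵢ|^p ≤ Σ|xᵢ|^p + p Σ sign(xᵢ)|xᵢ|^{p−1} uᵢ + 2^{2−p} Σ|uᵢ|^p`. -/
theorem stmt10 (p : ℝ) (hp : p ∈ Set.Ioc (1 : ℝ) 2) (d : ℕ) (x u : Fin d → ℝ) :
    ∑ i, |x i + u i| ^ p ≤
      (∑ i, |x i| ^ p) + p * ∑ i, Real.sign (x i) * |x i| ^ (p - 1) * u i +
        2 ^ (2 - p) * ∑ i, |u i| ^ p := by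
  calc ∑ i, |x i + u i| ^ p
      ≤ ∑ i, (|x i| ^ p + p * (Real.sign (x i) * |x i| ^ (p - 1) * u i)
          + 2 ^ (2 - p) * |u i| ^ p) :=
        Finset.sum_le_sum fun i _ ↦ abs_add_rpow_le hp.1 hp.2 (x i) (u i)
    _ = _ := by simp only [Finset.sum_add_distrib, Finset.mul_sum]
end

section
/- Let p ∈ (1,2] and λ ≥ 0, and let V : ℝ^d → ℝ be a function such that x ↦ V(x) + λ‖x‖_p^p is convex. Then at every point x where V is differentiable and for every u ∈ ℝ^d, V(x+u) ≥ V(x) + ⟨u, ∇V(x)⟩ − λ 2^{2−p} ‖u‖_p^p; equivalently, the convexity defect satisfies 𝒟_V(x, y) ≤ λ 2^{2−p} ‖y−x‖_p^p. -/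
/-!
Since `p > 1`, `Φ x = ∑ i, |x i| ^ p` is differentiable, so the gradient inequality for the
convex function `V + λ Φ` reduces the claim to the Bregman bound
`Φ (x + u) - Φ x - Φ'(x) u ≤ 2 ^ (2 - p) * Φ u`, which splits into coordinates. In one variable, with
`ψ y = |y| ^ (p - 2) * y`, the defect `|a + b| ^ p - |a| ^ p - p ψ(a) b` is
`∫₀¹ p (ψ (a + t b) - ψ a) b dt`, and `ψ` is `(p - 1)`-Hölder with constant `2 ^ (2 - p)`, so the
integrand is at most `p 2 ^ (2 - p) t ^ (p - 1) |b| ^ p`, whose integral is `2 ^ (2 - p) |b| ^ p`.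
-/

open Real Set

theorem ConvexOn.add_fderiv_sub_le {E : Type*} [NormedAddCommGroup E] [NormedSpace ℝ E]
    {s : Set E} {f : E → ℝ} {f' : E →L[ℝ] ℝ} {x y : E} (hf : ConvexOn ℝ s f) (hx : x ∈ s)
    (hy : y ∈ s) (hf' : HasFDerivAt f f' x) : f x + f' (y - x) ≤ f y := by
  have hline : HasDerivAt (f ∘ AffineMap.lineMap (k := ℝ) x y) (f' (y - x)) 0 := by
    refine HasFDerivAt.comp_hasDerivAt (0 : ℝ) ?_ AffineMap.hasDerivAt_lineMap
    simpa using hf'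
  have := (hf.comp_affineMap (AffineMap.lineMap x y)).le_slope_of_hasDerivAt
    (by simpa using hx) (by simpa using hy) zero_lt_one hline
  simp only [slope_def_field, Function.comp_apply, AffineMap.lineMap_apply_zero,
    AffineMap.lineMap_apply_one, sub_zero, div_one] at this
  linarith

lemma rpow_sub_rpow_le_abs_sub_rpow {s x y : ℝ} (hs0 : 0 ≤ s) (hs1 : s ≤ 1) (hx : 0 ≤ x)
    (hy : 0 ≤ y) : x ^ s - y ^ s ≤ |x - y| ^ s := by
  have : x ^ s ≤ (|x - y| + y) ^ s := rpow_le_rpow hx (by linarith [le_abs_self (x - y)]) hs0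
  linarith [rpow_add_le_add_rpow (abs_nonneg (x - y)) hy hs0 hs1]

lemma abs_rpow_sub_rpow_le {s x y : ℝ} (hs0 : 0 ≤ s) (hs1 : s ≤ 1) (hx : 0 ≤ x)
    (hy : 0 ≤ y) : |x ^ s - y ^ s| ≤ |x - y| ^ s := by
  rw [abs_sub_le_iff]
  refine ⟨rpow_sub_rpow_le_abs_sub_rpow hs0 hs1 hx hy, ?_⟩
  rw [abs_sub_comm]
  exact rpow_sub_rpow_le_abs_sub_rpow hs0 hs1 hy hx

lemma rpow_add_rpow_le_two_rpow_mul {s x y : ℝ} (hs0 : 0 ≤ s) (hs1 : s ≤ 1) (hx : 0 ≤ x)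
    (hy : 0 ≤ y) : x ^ s + y ^ s ≤ 2 ^ (1 - s) * (x + y) ^ s := by
  have h := (concaveOn_rpow hs0 hs1).2 (mem_Ici.2 hx) (mem_Ici.2 hy)
    (by norm_num : (0 : ℝ) ≤ 1 / 2) (by norm_num : (0 : ℝ) ≤ 1 / 2) (by norm_num)
  have htwo : (2 : ℝ) ^ (1 - s) * 2 ^ s = 2 := by
    rw [← rpow_add two_pos, sub_add_cancel, rpow_one]
  simp only [smul_eq_mul] at h
  rw [show 1 / 2 * x + 1 / 2 * y = (x + y) / 2 by ring, div_rpow (by positivity) zero_le_two] at h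
  rw [le_div_iff₀ (by positivity)] at h
  calc x ^ s + y ^ s = 2 ^ (1 - s) * ((1 / 2 * x ^ s + 1 / 2 * y ^ s) * 2 ^ s) := by
        linear_combination (-(x ^ s + y ^ s) / 2) * htwo
    _ ≤ 2 ^ (1 - s) * (x + y) ^ s := mul_le_mul_of_nonneg_left h (by positivity)

lemma abs_rpow_sub_one_mul_self_of_nonneg {s x : ℝ} (hs : 0 < s) (hx : 0 ≤ x) :
    |x| ^ (s - 1) * x = x ^ s := by
  rcases hx.eq_or_lt with rfl | hx
  · simp [zero_rpow hs.ne']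
  · rw [abs_of_pos hx, ← rpow_add_one hx.ne', sub_add_cancel]

-- For equal signs use subadditivity of `t ↦ t ^ s`, for opposite signs its concavity.
lemma abs_abs_rpow_sub_one_mul_sub_le {s : ℝ} (hs0 : 0 < s) (hs1 : s ≤ 1) (x y : ℝ) :
    |(|x| ^ (s - 1) * x) - |y| ^ (s - 1) * y| ≤ 2 ^ (1 - s) * |x - y| ^ s := by
  wlog hx : 0 ≤ x generalizing x y
  · have := this (-x) (-y) (by linarith)
    rwa [abs_neg, abs_neg, neg_sub_neg, abs_sub_comm y x,
      show |x| ^ (s - 1) * -x - |y| ^ (s - 1) * -y = -(|x| ^ (s - 1) * x - |y| ^ (s - 1) * y) by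
        ring, abs_neg] at this
  have hψx := abs_rpow_sub_one_mul_self_of_nonneg hs0 hx
  rcases le_or_gt 0 y with hy | hy
  · rw [hψx, abs_rpow_sub_one_mul_self_of_nonneg hs0 hy]
    calc |x ^ s - y ^ s| ≤ |x - y| ^ s := abs_rpow_sub_rpow_le hs0.le hs1 hx hy
      _ ≤ 2 ^ (1 - s) * |x - y| ^ s :=
        le_mul_of_one_le_left (by positivity) (one_le_rpow one_le_two (by linarith))
  · have hψy : |y| ^ (s - 1) * y = -(-y) ^ s := by
      rw [← abs_neg, ← abs_rpow_sub_one_mul_self_of_nonneg hs0 (neg_nonneg.2 hy.le)]; ring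
    have hy' : 0 ≤ -y := by linarith
    rw [hψx, hψy, sub_neg_eq_add, abs_of_nonneg (add_nonneg (rpow_nonneg hx s) (rpow_nonneg hy' s)),
      abs_of_nonneg (by linarith : 0 ≤ x - y), sub_eq_add_neg]
    exact rpow_add_rpow_le_two_rpow_mul hs0.le hs1 hx hy'

lemma abs_add_rpow_le_s11 {p : ℝ} (hp1 : 1 < p) (hp2 : p ≤ 2) (a b : ℝ) :
    |a + b| ^ p ≤ |a| ^ p + p * |a| ^ (p - 2) * a * b + 2 ^ (2 - p) * |b| ^ p := by
  set c := 2 ^ (2 - p) * |b| ^ p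
  set h : ℝ → ℝ := fun t ↦ |a + t * b| ^ p - t * (p * |a| ^ (p - 2) * a * b) - t ^ p * c with hh
  set h' : ℝ → ℝ := fun t ↦
    p * (|a + t * b| ^ (p - 2) * (a + t * b) - |a| ^ (p - 2) * a) * b - p * t ^ (p - 1) * c
  have hderiv (t : ℝ) : HasDerivAt h (h' t) t := by
    have hline : HasDerivAt (fun t : ℝ ↦ a + t * b) b t := by
      simpa using ((hasDerivAt_id t).mul_const b).const_add a
    refine ((((hasDerivAt_abs_rpow (a + t * b) hp1).comp t hline).sub
      (hasDerivAt_mul_const _)).sub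
      ((hasDerivAt_rpow_const (Or.inr hp1.le)).mul_const c)).congr_deriv ?_
    simp only [h']
    ring
  have hderiv_nonpos {t : ℝ} (ht : t ∈ Ioo 0 1) : h' t ≤ 0 := by
    have hψ := abs_abs_rpow_sub_one_mul_sub_le (s := p - 1) (by linarith) (by linarith)
      (a + t * b) a
    rw [show p - 1 - 1 = p - 2 by ring, show 1 - (p - 1) = 2 - p by ring, add_sub_cancel_left,
      abs_mul, abs_of_pos ht.1, mul_rpow ht.1.le (abs_nonneg b)] at hψ
    have hb : |b| ^ (p - 1) * |b| = |b| ^ p := by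
      simpa using abs_rpow_sub_one_mul_self_of_nonneg (by linarith) (abs_nonneg b)
    have : (|a + t * b| ^ (p - 2) * (a + t * b) - |a| ^ (p - 2) * a) * b ≤ t ^ (p - 1) * c :=
      calc _ ≤ |(|a + t * b| ^ (p - 2) * (a + t * b) - |a| ^ (p - 2) * a)| * |b| := by
            rw [← abs_mul]; exact le_abs_self _
        _ ≤ 2 ^ (2 - p) * (t ^ (p - 1) * |b| ^ (p - 1)) * |b| :=
            mul_le_mul_of_nonneg_right hψ (abs_nonneg b)
        _ = t ^ (p - 1) * c := by simp only [c, ← hb]; ring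
    simp only [h']
    linarith [mul_le_mul_of_nonneg_left this (by linarith : (0 : ℝ) ≤ p)]
  have hanti := antitoneOn_of_hasDerivWithinAt_nonpos (convex_Icc (0 : ℝ) 1)
    (fun t _ ↦ (hderiv t).continuousAt.continuousWithinAt) (fun t _ ↦ (hderiv t).hasDerivWithinAt)
    (by simpa only [interior_Icc] using fun t ht ↦ hderiv_nonpos ht)
  have := hanti (left_mem_Icc.2 zero_le_one) (right_mem_Icc.2 zero_le_one) zero_le_one
  simp only [hh, zero_mul, add_zero, zero_rpow (by linarith : p ≠ 0), sub_zero, one_mul,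
    one_rpow] at this
  linarith

lemma hasFDerivAt_sum_abs_rpow {ι : Type*} [Fintype ι] {p : ℝ} (hp : 1 < p)
    (x : EuclideanSpace ℝ ι) :
    HasFDerivAt (fun y : EuclideanSpace ℝ ι ↦ ∑ i, |y i| ^ p)
      (∑ i, (p * |x i| ^ (p - 2) * x i) • EuclideanSpace.proj (𝕜 := ℝ) i) x :=
  HasFDerivAt.fun_sum fun i _ ↦
    (hasDerivAt_abs_rpow (x i) hp).comp_hasFDerivAt (h₂ := fun y : ℝ ↦ |y| ^ p) x
      (EuclideanSpace.proj (𝕜 := ℝ) i).hasFDerivAt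

/-- if `V + λ‖·‖_p^p` is convex, `1 < p ≤ 2`, then the convexity defect of `V`
is controlled: `V(x+u) ≥ V(x) + ⟨u, ∇V(x)⟩ − λ 2^{2−p} ‖u‖_p^p` at points of
differentiability. -/
theorem stmt11 {d : ℕ} (p lam : ℝ) (hp : p ∈ Set.Ioc (1 : ℝ) 2) (hlam : 0 ≤ lam)
    (V : EuclideanSpace ℝ (Fin d) → ℝ)
    (hconv : ConvexOn ℝ Set.univ (fun x => V x + lam * ∑ i, |x i| ^ p)) :
    ∀ x : EuclideanSpace ℝ (Fin d), DifferentiableAt ℝ V x →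
      ∀ u : EuclideanSpace ℝ (Fin d),
        V x + fderiv ℝ V x u - lam * 2 ^ (2 - p) * ∑ i, |u i| ^ p ≤ V (x + u) := by
  intro x hV u
  have hgrad := hconv.add_fderiv_sub_le (mem_univ x) (mem_univ (x + u))
    (hV.hasFDerivAt.add ((hasFDerivAt_sum_abs_rpow hp.1 x).const_mul lam))
  have hbregman : ∑ i, |x i + u i| ^ p ≤ ∑ i, |x i| ^ p + ∑ i, p * |x i| ^ (p - 2) * x i * u i
      + 2 ^ (2 - p) * ∑ i, |u i| ^ p := by
    simpa only [Finset.sum_add_distrib, Finset.mul_sum] using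
      Finset.sum_le_sum fun i _ ↦ abs_add_rpow_le_s11 hp.1 hp.2 (x i) (u i)
  simp only [add_sub_cancel_left, add_apply, smul_apply,
    sum_apply, PiLp.proj_apply, PiLp.add_apply, smul_eq_mul] at hgrad
  linarith [mul_le_mul_of_nonneg_left hbregman hlam]
end
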